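/- arXiv:1808.04837 — 8 statements merged into one kernel-verified Lean document; each statement's English description precedes it below -/
import Mathlib

section
/- ∫₀^∞ x^{-11/8} √(√(1+x) − 1) dx = 4 Γ(1/4)² / (3 √(2−√2) √π). -/
/-!
The substitution `x = 4t/(1-t)²`, i.e. `t = (√(1+x) - 1)/(√(1+x) + 1)`, rationalises the
integrand: `√(1+x) = (1+t)/(1-t)`, and `x^(-s) √(√(1+x) - 1) dx` becomes
`2^(5/2-2s) t^(1/2-s) (1-t)^(2s-7/2) (1+t) dt` on `(0, 1)`, a sum of two Beta integrals.
For `s = 11/8` these are `B(1/8, 1/4)` and `B(9/8, 1/4) = B(1/8, 1/4)/3`; the duplication formula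
at `1/8` and the reflection formula at `3/8` express `B(1/8, 1/4)` through `Γ(1/4)²`, and
`cos(π/8) √(2 - √2) = sin(π/4)` produces the closed form.
-/

open Real MeasureTheory Set ProbabilityTheory

lemma ofReal_rpow_mul_one_sub_rpow {a b x : ℝ} (hx : x ∈ Icc (0 : ℝ) 1) :
    ((x ^ (a - 1) * (1 - x) ^ (b - 1) : ℝ) : ℂ) =
      (x : ℂ) ^ ((a : ℂ) - 1) * (1 - (x : ℂ)) ^ ((b : ℂ) - 1) := by
  rw [Complex.ofReal_mul, Complex.ofReal_cpow hx.1, Complex.ofReal_cpow (sub_nonneg.2 hx.2)]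
  push_cast
  rfl

lemma integrableOn_rpow_mul_one_sub_rpow {a b : ℝ} (ha : 0 < a) (hb : 0 < b) :
    IntegrableOn (fun x : ℝ => x ^ (a - 1) * (1 - x) ^ (b - 1)) (Ioo 0 1) := by
  have h := Complex.betaIntegral_convergent (u := a) (v := b) (by simpa) (by simpa)
  rw [intervalIntegrable_iff_integrableOn_Ioo_of_le zero_le_one] at h
  simpa [IntegrableOn] using (h.congr_fun (fun x hx =>
    (ofReal_rpow_mul_one_sub_rpow (Ioo_subset_Icc_self hx)).symm) measurableSet_Ioo).re

lemma integral_rpow_mul_one_sub_rpow {a b : ℝ} (ha : 0 < a) (hb : 0 < b) :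
    ∫ x in Ioo 0 1, x ^ (a - 1) * (1 - x) ^ (b - 1) = beta a b := by
  rw [beta_eq_betaIntegralReal a b ha hb, Complex.betaIntegral,
    intervalIntegral.integral_of_le zero_le_one, integral_Ioc_eq_integral_Ioo,
    ← setIntegral_congr_fun measurableSet_Ioo
      (fun x hx => ofReal_rpow_mul_one_sub_rpow (Ioo_subset_Icc_self hx)),
    integral_complex_ofReal, Complex.ofReal_re]

lemma beta_add_beta_add_one {a b : ℝ} (ha : a ≠ 0) (hab : a + b ≠ 0) :
    beta a b + beta (a + 1) b = (2 * a + b) / (a + b) * beta a b := by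
  rw [beta, beta, Gamma_add_one ha, add_right_comm, Gamma_add_one hab]
  field_simp
  ring

lemma integral_rpow_mul_one_sub_rpow_mul_one_add {a b : ℝ} (ha : 0 < a) (hb : 0 < b) :
    ∫ x in Ioo 0 1, x ^ (a - 1) * (1 - x) ^ (b - 1) * (1 + x) =
      (2 * a + b) / (a + b) * beta a b := by
  have hsplit : EqOn (fun x : ℝ => x ^ (a - 1) * (1 - x) ^ (b - 1) * (1 + x))
      (fun x => x ^ (a - 1) * (1 - x) ^ (b - 1) + x ^ (a + 1 - 1) * (1 - x) ^ (b - 1))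
      (Ioo 0 1) := fun x hx => by
    dsimp only
    rw [add_sub_right_comm, rpow_add_one hx.1.ne']
    ring
  rw [setIntegral_congr_fun measurableSet_Ioo hsplit,
    integral_add (integrableOn_rpow_mul_one_sub_rpow ha hb)
      (integrableOn_rpow_mul_one_sub_rpow (by linarith) hb),
    integral_rpow_mul_one_sub_rpow ha hb, integral_rpow_mul_one_sub_rpow (by linarith) hb,
    beta_add_beta_add_one ha.ne' (by positivity)]

lemma cos_pi_div_eight_mul_sqrt_two_sub_sqrt_two : cos (π / 8) * √(2 - √2) = √2 / 2 := by
  have h : √(2 - √2) = 2 * sin (π / 8) := by rw [sin_pi_div_eight]; ring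
  rw [h, ← sin_pi_div_four, show π / 4 = 2 * (π / 8) by ring, sin_two_mul]
  ring

lemma beta_one_eighth_one_quarter :
    beta (1 / 8) (1 / 4) = 2 ^ (3 / 4 : ℝ) * Gamma (1 / 4) ^ 2 * cos (π / 8) / √π := by
  have hdup : Gamma (1 / 8) * Gamma (5 / 8) = Gamma (1 / 4) * 2 ^ (3 / 4 : ℝ) * √π := by
    have h := Gamma_mul_Gamma_add_half (1 / 8)
    norm_num at h
    exact h
  have hrefl : Gamma (3 / 8) * Gamma (5 / 8) = π / cos (π / 8) := by
    have h := Gamma_mul_Gamma_one_sub (3 / 8)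
    rwa [show (1 : ℝ) - 3 / 8 = 5 / 8 by norm_num, show π * (3 / 8) = π / 2 - π / 8 by ring,
      sin_pi_div_two_sub] at h
  have hcos : 0 < cos (π / 8) :=
    cos_pos_of_mem_Ioo ⟨by linarith [pi_pos], by linarith [pi_pos]⟩
  have hG38 : 0 < Gamma (3 / 8) := Gamma_pos_of_pos (by norm_num)
  have hG58 : 0 < Gamma (5 / 8) := Gamma_pos_of_pos (by norm_num)
  rw [beta, show (1 : ℝ) / 8 + 1 / 4 = 3 / 8 by norm_num,
    div_eq_div_iff hG38.ne' (sqrt_pos.2 pi_pos).ne']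
  apply mul_right_cancel₀ hG58.ne'
  field_simp at hrefl
  linear_combination Gamma (1 / 4) * √π * hdup - 2 ^ (3 / 4 : ℝ) * Gamma (1 / 4) ^ 2 * hrefl
    + Gamma (1 / 4) ^ 2 * 2 ^ (3 / 4 : ℝ) * mul_self_sqrt pi_pos.le

lemma hasDerivAt_four_mul_div_one_sub_sq {t : ℝ} (ht : t ≠ 1) :
    HasDerivAt (fun t => 4 * t / (1 - t) ^ 2) (4 * (1 + t) / (1 - t) ^ 3) t := by
  have hne : (1 - t) ^ 2 ≠ 0 := pow_ne_zero 2 (sub_ne_zero.2 ht.symm)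
  refine (((hasDerivAt_id t).const_mul 4).div (((hasDerivAt_id t).const_sub 1).pow 2)
    hne).congr_deriv ?_
  simp only [id, Pi.pow_apply]
  field_simp
  ring

lemma injOn_four_mul_div_one_sub_sq : InjOn (fun t : ℝ => 4 * t / (1 - t) ^ 2) (Ioo 0 1) := by
  intro a ⟨ha₀, ha₁⟩ b ⟨hb₀, hb₁⟩ h
  have hab : a * b < 1 := by nlinarith
  have ha : 1 - a ≠ 0 := by linarith
  have hb : 1 - b ≠ 0 := by linarith
  field_simp at h
  nlinarith

lemma sqrt_one_add_four_mul_div_one_sub_sq {t : ℝ} (ht₀ : -1 ≤ t) (ht₁ : t < 1) :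
    √(1 + 4 * t / (1 - t) ^ 2) = (1 + t) / (1 - t) := by
  have h : 1 - t ≠ 0 := by linarith
  rw [show 1 + 4 * t / (1 - t) ^ 2 = ((1 + t) / (1 - t)) ^ 2 by field_simp; ring,
    sqrt_sq (div_nonneg (by linarith) (by linarith))]

lemma image_four_mul_div_one_sub_sq_Ioo :
    (fun t : ℝ => 4 * t / (1 - t) ^ 2) '' Ioo 0 1 = Ioi 0 := by
  refine Subset.antisymm ?_ fun x (hx : 0 < x) => ?_
  · rintro _ ⟨t, ⟨ht₀, ht₁⟩, rfl⟩
    exact div_pos (by linarith : (0 : ℝ) < 4 * t) (pow_pos (by linarith : (0 : ℝ) < 1 - t) 2)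
  · set w := √(1 + x)
    have hw : w ^ 2 = 1 + x := sq_sqrt (by linarith)
    have hw₁ : 1 < w := by nlinarith [sqrt_nonneg (1 + x)]
    refine ⟨(w - 1) / (w + 1), ⟨by positivity, ?_⟩, ?_⟩
    · rw [div_lt_one (by linarith)]; linarith
    · have : w + 1 ≠ 0 := by linarith
      field_simp
      linear_combination 4 * hw

lemma integral_Ioi_eq_integral_Ioo_four_mul_div_one_sub_sq {E : Type*} [NormedAddCommGroup E]
    [NormedSpace ℝ E] (g : ℝ → E) :
    ∫ x in Ioi 0, g x =
      ∫ t in Ioo 0 1, (4 * (1 + t) / (1 - t) ^ 3) • g (4 * t / (1 - t) ^ 2) := by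
  rw [← image_four_mul_div_one_sub_sq_Ioo, integral_image_eq_integral_abs_deriv_smul
    measurableSet_Ioo (fun t ht => (hasDerivAt_four_mul_div_one_sub_sq ht.2.ne).hasDerivWithinAt)
    injOn_four_mul_div_one_sub_sq]
  refine setIntegral_congr_fun measurableSet_Ioo fun t ⟨ht₀, ht₁⟩ => ?_
  rw [abs_of_pos (div_pos (by linarith) (pow_pos (by linarith) 3))]

lemma mul_rpow_neg_mul_sqrt_sqrt_one_add_sub_one_four_mul_div_one_sub_sq (s : ℝ) {t : ℝ}
    (ht₀ : 0 < t) (ht₁ : t < 1) :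
    4 * (1 + t) / (1 - t) ^ 3 *
        ((4 * t / (1 - t) ^ 2) ^ (-s) * √(√(1 + 4 * t / (1 - t) ^ 2) - 1)) =
      2 ^ (5 / 2 - 2 * s) * (t ^ (3 / 2 - s - 1) * (1 - t) ^ (2 * s - 5 / 2 - 1) * (1 + t)) := by
  have ht : 0 < 1 - t := by linarith
  have hsqrt : √(1 + 4 * t / (1 - t) ^ 2) - 1 = 2 * t / (1 - t) := by
    rw [sqrt_one_add_four_mul_div_one_sub_sq (by linarith) ht₁]
    field_simp
    ring
  rw [hsqrt, ← exp_log (by positivity : 0 < 4 * (1 + t) / (1 - t) ^ 3 *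
      ((4 * t / (1 - t) ^ 2) ^ (-s) * √(2 * t / (1 - t)))),
    ← exp_log (by positivity : 0 < (2 : ℝ) ^ (5 / 2 - 2 * s) *
      (t ^ (3 / 2 - s - 1) * (1 - t) ^ (2 * s - 5 / 2 - 1) * (1 + t)))]
  congr 1
  simp (disch := positivity) only [log_mul, log_div, log_rpow, log_pow, log_sqrt]
  rw [show (4 : ℝ) = 2 ^ 2 by norm_num, log_pow]
  push_cast
  ring

theorem integral_rpow_neg_mul_sqrt_sqrt_one_add_sub_one {s : ℝ} (hs₁ : 5 / 4 < s)
    (hs₂ : s < 3 / 2) :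
    ∫ x in Ioi 0, x ^ (-s) * √(√(1 + x) - 1) =
      2 ^ (5 / 2 - 2 * s) / (2 * (s - 1)) * beta (3 / 2 - s) (2 * s - 5 / 2) := by
  rw [integral_Ioi_eq_integral_Ioo_four_mul_div_one_sub_sq,
    setIntegral_congr_fun measurableSet_Ioo fun t ht => (smul_eq_mul _ _).trans
      (mul_rpow_neg_mul_sqrt_sqrt_one_add_sub_one_four_mul_div_one_sub_sq s ht.1 ht.2),
    integral_const_mul,
    integral_rpow_mul_one_sub_rpow_mul_one_add (by linarith) (by linarith)]
  rw [show 2 * (3 / 2 - s) + (2 * s - 5 / 2) = 1 / 2 by ring,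
    show 3 / 2 - s + (2 * s - 5 / 2) = s - 1 by ring]
  have hs : s - 1 ≠ 0 := by linarith
  field_simp

theorem stmt_3 :
    ∫ x in Set.Ioi (0 : ℝ), x ^ (-(11 : ℝ) / 8) * Real.sqrt (Real.sqrt (1 + x) - 1) =
      4 * Real.Gamma (1 / 4) ^ 2 / (3 * Real.sqrt (2 - Real.sqrt 2) * Real.sqrt π) := by
  have hconst :
      (2 : ℝ) ^ (-1 / 4 : ℝ) * 2 ^ (3 / 4 : ℝ) * (cos (π / 8) * √(2 - √2)) = 1 := by
    rw [← rpow_add two_pos, cos_pi_div_eight_mul_sqrt_two_sub_sqrt_two, sqrt_eq_rpow,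
      ← mul_div_assoc, ← rpow_add two_pos]
    norm_num
  rw [neg_div, integral_rpow_neg_mul_sqrt_sqrt_one_add_sub_one (by norm_num) (by norm_num),
    show (3 / 2 - 11 / 8 : ℝ) = 1 / 8 by norm_num,
    show (2 * (11 / 8) - 5 / 2 : ℝ) = 1 / 4 by norm_num,
    show (5 / 2 - 2 * (11 / 8) : ℝ) = -1 / 4 by norm_num, beta_one_eighth_one_quarter]
  have hsqrt : 0 < √(2 - √2) := sqrt_pos.2 (by
    nlinarith [sq_sqrt (zero_le_two : (0 : ℝ) ≤ 2), sqrt_nonneg 2])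
  have hπ : 0 < √π := sqrt_pos.2 pi_pos
  rw [eq_div_iff (by positivity)]
  calc _ = 2 ^ (-1 / 4 : ℝ) * 2 ^ (3 / 4 : ℝ) * (cos (π / 8) * √(2 - √2)) *
        (4 * Gamma (1 / 4) ^ 2) * (√π / √π) := by ring
    _ = 4 * Gamma (1 / 4) ^ 2 := by rw [hconst, div_self hπ.ne']; ring
end

section
/- For all x with |x| < 1 and β > 0, ((√(1+x) − 1)/x)^β = 2^{−β} · Σ_{k≥0} (β/2)_k ((β+1)/2)_k / ((β+1)_k k!) · (−x)^k. -/
/-!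
The series is `₂F₁(β/2, (β+1)/2; β+1; z)` at `z = -x`. Its derivatives are again hypergeometric
series, so it solves the hypergeometric equation, and for any solution `f` of that equation
`Q = (β f - 2(1-z) f')² - 4(1-z) f'²` satisfies `z Q' + (β+1) Q = 0`; hence `z^(β+1) Q` is
constant and `Q = 0` on `(0, 1)`. With `s = √(1-z)`, `Q` factors as `P R` where
`P = β f - 2 s (1+s) f'` and `R = β f - 2 s (s-1) f'`. Since `R(0) = β > 0`, `P` vanishes on some
`(0, ε)`, and `P = 0` says exactly that `((1+s)/2)^β f` is constant. So
`f = ((1 + √(1-z))/2)^(-β)` on `(0, ε)`, and the identity theorem for analytic functions extends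
this to the unit disc.
-/

open Real Polynomial Set Filter Topology FormalMultilinearSeries

theorem hasDerivAt_tsum_mul_pow_of_lt_radius {𝕜 : Type*} [NontriviallyNormedField 𝕜]
    [CompleteSpace 𝕜] {a : ℕ → 𝕜} {z : 𝕜} (hz : ‖z‖ₑ < (ofScalars 𝕜 a).radius) :
    HasDerivAt (fun w ↦ ∑' n, a n * w ^ n) (∑' n, (n + 1) * a (n + 1) * z ^ n) z := by
  have hz' : z ∈ Metric.eball 0 (ofScalars 𝕜 a).derivSeries.radius := by
    simpa using hz.trans_le (ofScalars 𝕜 a).radius_le_radius_derivSeries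
  have hsum := (ContinuousLinearMap.apply 𝕜 𝕜 (1 : 𝕜)).hasSum
    ((ofScalars 𝕜 a).derivSeries.hasSum hz')
  have hcoeff (n : ℕ) : ContinuousLinearMap.apply 𝕜 𝕜 (1 : 𝕜)
      ((ofScalars 𝕜 a).derivSeries n fun _ ↦ z) = (n + 1) * a (n + 1) * z ^ n := by
    simp only [apply_eq_prod_smul_coeff, Finset.prod_const, Finset.card_univ, Fintype.card_fin,
      map_smul, ContinuousLinearMap.apply_apply, derivSeries_coeff_one, coeff_ofScalars,
      nsmul_eq_mul, Nat.cast_add, Nat.cast_one, smul_eq_mul]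
    ring
  have hsum_eq : (ofScalars 𝕜 a).sum = fun w ↦ ∑' n, a n * w ^ n := by
    ext w
    simp [FormalMultilinearSeries.sum, mul_comm]
  simp only [hcoeff] at hsum
  have h := ((ofScalars 𝕜 a).hasFDerivAt_sum hz).hasDerivAt
  rw [hsum_eq] at h
  rwa [hsum.tsum_eq]

theorem hasSum_mul_pow_of_hasSum_succ {𝕜 : Type*} [NormedField 𝕜] {f : ℕ → 𝕜} {z s : 𝕜}
    (h : HasSum (fun n ↦ f (n + 1) * z ^ n) s) : HasSum (fun n ↦ f n * z ^ n) (f 0 + z * s) := by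
  refine (hasSum_nat_add_iff' 1).mp ?_
  simpa [pow_succ, mul_comm, mul_left_comm, mul_assoc] using h.mul_left z

theorem eq_of_hasDerivAt_eq_zero_of_continuousOn {f : ℝ → ℝ} {a b : ℝ} (hab : a < b)
    (hf : ContinuousOn f (Icc a b)) (hf' : ∀ x ∈ Ioo a b, HasDerivAt f 0 x) : f b = f a := by
  obtain ⟨c, -, hc⟩ := exists_hasDerivAt_eq_slope f (fun _ ↦ 0) hab hf hf'
  rw [eq_comm, div_eq_zero_iff, sub_eq_zero] at hc
  exact hc.resolve_right (sub_ne_zero.2 hab.ne')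

section Hypergeometric

variable {𝕂 : Type*} [RCLike 𝕂] {a b c : 𝕂}

theorem succ_mul_ordinaryHypergeometricCoefficient_succ (n : ℕ) :
    (n + 1) * ordinaryHypergeometricCoefficient a b c (n + 1) =
      a * b / c * ordinaryHypergeometricCoefficient (a + 1) (b + 1) (c + 1) n := by
  simp only [ordinaryHypergeometricCoefficient, ascPochhammer_succ_left, eval_mul, eval_X,
    eval_comp, eval_add, eval_one, Nat.factorial_succ, Nat.cast_mul]
  have : (n + 1 : 𝕂) ≠ 0 := by exact_mod_cast n.succ_ne_zero
  field_simp
  push_cast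
  ring

theorem ordinaryHypergeometricCoefficient_recurrence {n : ℕ} (hc : c + n ≠ 0) :
    (n + 1) * (c + n) * ordinaryHypergeometricCoefficient a b c (n + 1) =
      (a + n) * (b + n) * ordinaryHypergeometricCoefficient a b c n := by
  simp only [ordinaryHypergeometricCoefficient, ascPochhammer_succ_eval, Nat.factorial_succ,
    Nat.cast_mul, mul_inv]
  have : (n + 1 : 𝕂) ≠ 0 := by exact_mod_cast n.succ_ne_zero
  field_simp
  push_cast
  ring

theorem ordinaryHypergeometric_eq_tsum_mul :
    ₂F₁ a b c = fun z : 𝕂 ↦ ∑' n, ordinaryHypergeometricCoefficient a b c n * z ^ n :=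
  funext (ordinaryHypergeometric_sum_eq a b c)

theorem hasSum_ordinaryHypergeometric {z : 𝕂}
    (hz : ‖z‖ₑ < (ordinaryHypergeometricSeries 𝕂 a b c).radius) :
    HasSum (fun n ↦ ordinaryHypergeometricCoefficient a b c n * z ^ n) (₂F₁ a b c z) := by
  have h := (ordinaryHypergeometricSeries 𝕂 a b c).hasSum (x := z) (by simpa using hz)
  simp only [ordinaryHypergeometricSeries_apply_eq] at h
  exact h

theorem hasDerivAt_ordinaryHypergeometric {z : 𝕂}
    (hz : ‖z‖ₑ < (ordinaryHypergeometricSeries 𝕂 a b c).radius) :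
    HasDerivAt (₂F₁ a b c) (a * b / c * ₂F₁ (a + 1) (b + 1) (c + 1) z) z := by
  have hcoeff (n : ℕ) : (n + 1) * ordinaryHypergeometricCoefficient a b c (n + 1) * z ^ n =
      a * b / c * (ordinaryHypergeometricCoefficient (a + 1) (b + 1) (c + 1) n * z ^ n) := by
    rw [succ_mul_ordinaryHypergeometricCoefficient_succ, mul_assoc]
  rw [ordinaryHypergeometric_eq_tsum_mul, ordinaryHypergeometric_eq_tsum_mul]
  simpa only [hcoeff, tsum_mul_left] using hasDerivAt_tsum_mul_pow_of_lt_radius hz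

theorem ordinaryHypergeometric_params_add_one
    (habc : ∀ kn : ℕ, ↑kn ≠ -a ∧ ↑kn ≠ -b ∧ ↑kn ≠ -c) :
    ∀ kn : ℕ, (kn : 𝕂) ≠ -(a + 1) ∧ (kn : 𝕂) ≠ -(b + 1) ∧ (kn : 𝕂) ≠ -(c + 1) := by
  intro k
  obtain ⟨ha, hb, hc⟩ := habc (k + 1)
  push_cast at ha hb hc
  exact ⟨fun e ↦ ha (by linear_combination e), fun e ↦ hb (by linear_combination e),
    fun e ↦ hc (by linear_combination e)⟩

theorem enorm_lt_ordinaryHypergeometricSeries_radius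
    (habc : ∀ kn : ℕ, ↑kn ≠ -a ∧ ↑kn ≠ -b ∧ ↑kn ≠ -c) {z : 𝕂} (hz : ‖z‖ < 1) :
    ‖z‖ₑ < (ordinaryHypergeometricSeries 𝕂 a b c).radius := by
  rw [ordinaryHypergeometricSeries_radius_eq_one 𝕂 a b c habc]
  simpa [← ofReal_norm] using hz

variable {z : 𝕂}

theorem deriv_ordinaryHypergeometric_eventuallyEq
    (habc : ∀ kn : ℕ, ↑kn ≠ -a ∧ ↑kn ≠ -b ∧ ↑kn ≠ -c) (hz : ‖z‖ < 1) :
    deriv (₂F₁ a b c) =ᶠ[𝓝 z] fun w ↦ a * b / c * ₂F₁ (a + 1) (b + 1) (c + 1) w := by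
  filter_upwards [Metric.isOpen_ball.mem_nhds (mem_ball_zero_iff.mpr hz)] with w hw
  exact (hasDerivAt_ordinaryHypergeometric
    (enorm_lt_ordinaryHypergeometricSeries_radius habc (mem_ball_zero_iff.mp hw))).deriv

theorem hasSum_deriv_ordinaryHypergeometric
    (habc : ∀ kn : ℕ, ↑kn ≠ -a ∧ ↑kn ≠ -b ∧ ↑kn ≠ -c) (hz : ‖z‖ < 1) :
    HasSum (fun n ↦ (n + 1) * ordinaryHypergeometricCoefficient a b c (n + 1) * z ^ n)
      (deriv (₂F₁ a b c) z) := by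
  rw [(deriv_ordinaryHypergeometric_eventuallyEq habc hz).eq_of_nhds]
  refine ((hasSum_ordinaryHypergeometric (enorm_lt_ordinaryHypergeometricSeries_radius
    (ordinaryHypergeometric_params_add_one habc) hz)).mul_left (a * b / c)).congr_fun fun n ↦ ?_
  rw [succ_mul_ordinaryHypergeometricCoefficient_succ, mul_assoc]

theorem hasSum_deriv_deriv_ordinaryHypergeometric
    (habc : ∀ kn : ℕ, ↑kn ≠ -a ∧ ↑kn ≠ -b ∧ ↑kn ≠ -c) (hz : ‖z‖ < 1) :
    HasSum (fun n ↦ (n + 1 + 1) * (n + 1) * ordinaryHypergeometricCoefficient a b c (n + 1 + 1)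
      * z ^ n) (deriv (deriv (₂F₁ a b c)) z) := by
  have habc₁ := ordinaryHypergeometric_params_add_one habc
  rw [(deriv_ordinaryHypergeometric_eventuallyEq habc hz).deriv_eq,
    ((hasDerivAt_ordinaryHypergeometric (enorm_lt_ordinaryHypergeometricSeries_radius habc₁
      hz)).const_mul (a * b / c)).deriv]
  refine (((hasSum_ordinaryHypergeometric (enorm_lt_ordinaryHypergeometricSeries_radius
    (ordinaryHypergeometric_params_add_one habc₁) hz)).mul_left
      ((a + 1) * (b + 1) / (c + 1))).mul_left (a * b / c)).congr_fun fun n ↦ ?_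
  have e1 := succ_mul_ordinaryHypergeometricCoefficient_succ (a := a) (b := b) (c := c) (n + 1)
  have e2 := succ_mul_ordinaryHypergeometricCoefficient_succ (a := a + 1) (b := b + 1)
    (c := c + 1) n
  push_cast at e1
  linear_combination (n + 1 : 𝕂) * z ^ n * e1 + a * b / c * z ^ n * e2

theorem ordinaryHypergeometric_ode
    (habc : ∀ kn : ℕ, ↑kn ≠ -a ∧ ↑kn ≠ -b ∧ ↑kn ≠ -c) (hz : ‖z‖ < 1) :
    z * (1 - z) * deriv (deriv (₂F₁ a b c)) z + (c - (a + b + 1) * z) * deriv (₂F₁ a b c) z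
      - a * b * ₂F₁ a b c z = 0 := by
  set C := ordinaryHypergeometricCoefficient a b c
  have h0 := hasSum_ordinaryHypergeometric (enorm_lt_ordinaryHypergeometricSeries_radius habc hz)
  have h1 := hasSum_deriv_ordinaryHypergeometric habc hz
  -- the terms `z F'`, `z F''` and `z² F''` as power series
  have h1z := hasSum_mul_pow_of_hasSum_succ (f := fun n ↦ n * C n) (by simpa using h1)
  have h2z := hasSum_mul_pow_of_hasSum_succ (f := fun n ↦ (n + 1) * n * C (n + 1))
    (by simpa using hasSum_deriv_deriv_ordinaryHypergeometric habc hz)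
  have h2zz := hasSum_mul_pow_of_hasSum_succ (f := fun n ↦ n * (n - 1) * C n)
    (by simpa using h2z)
  have hsum := (((h2z.sub h2zz).add (h1.mul_left c)).sub (h1z.mul_left (a + b + 1))).sub
    (h0.mul_left (a * b))
  have hzero (n : ℕ) : (n + 1) * n * C (n + 1) * z ^ n - n * (n - 1) * C n * z ^ n
      + c * ((n + 1) * C (n + 1) * z ^ n) - (a + b + 1) * (n * C n * z ^ n)
      - a * b * (C n * z ^ n) = 0 := by
    have hc : c + n ≠ 0 := fun e ↦ (habc n).2.2 (by linear_combination e)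
    linear_combination z ^ n * ordinaryHypergeometricCoefficient_recurrence (a := a) (b := b) hc
  linear_combination hsum.unique (hasSum_zero.congr_fun hzero)

end Hypergeometric

section HalfParameters

variable {β : ℝ} {f f' f'' : ℝ → ℝ}

theorem quadratic_invariant_eq_zero_of_hypergeometric_ode (hβ : 0 < β)
    (hf : ∀ z ∈ Ico (0 : ℝ) 1, HasDerivAt f (f' z) z)
    (hf' : ∀ z ∈ Ico (0 : ℝ) 1, HasDerivAt f' (f'' z) z)
    (hode : ∀ z ∈ Ioo (0 : ℝ) 1,
      z * (1 - z) * f'' z + (β + 1 - (β + 3 / 2) * z) * f' z - β * (β + 1) / 4 * f z = 0) :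
    ∀ z ∈ Ioo (0 : ℝ) 1, (β * f z - 2 * (1 - z) * f' z) ^ 2 - 4 * (1 - z) * f' z ^ 2 = 0 := by
  set Q : ℝ → ℝ := fun z ↦ (β * f z - 2 * (1 - z) * f' z) ^ 2 - 4 * (1 - z) * f' z ^ 2
  have hQ (z : ℝ) (hz : z ∈ Ico (0 : ℝ) 1) : HasDerivAt Q
      (2 * (β * f z - 2 * (1 - z) * f' z) * ((β + 2) * f' z - 2 * (1 - z) * f'' z)
        + 4 * f' z ^ 2 - 8 * (1 - z) * f' z * f'' z) z := by
    have h1 : HasDerivAt (fun z : ℝ ↦ 1 - z) (-1) z := by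
      simpa using (hasDerivAt_id z).const_sub 1
    have := (((hf z hz).const_mul β).fun_sub ((h1.const_mul 2).fun_mul (hf' z hz))).fun_pow 2
      |>.fun_sub ((h1.const_mul 4).fun_mul ((hf' z hz).fun_pow 2))
    refine this.congr_deriv ?_
    norm_num
    ring
  -- `z Q' + (β + 1) Q` is a multiple of the equation, so `z ^ (β + 1) * Q` is constant
  have hW (z : ℝ) (hz : z ∈ Ioo (0 : ℝ) 1) : HasDerivAt (fun z ↦ z ^ (β + 1) * Q z) 0 z := by
    refine ((Real.hasDerivAt_rpow_const (p := β + 1) (Or.inl hz.1.ne')).mul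
      (hQ z (Ioo_subset_Ico_self hz))).congr_deriv ?_
    rw [add_sub_cancel_right, Real.rpow_add_one hz.1.ne']
    linear_combination (-4) * z ^ β * (β * f z + 2 * z * f' z) * hode z hz
  intro z hz
  have hcont : ContinuousOn (fun z ↦ z ^ (β + 1) * Q z) (Icc 0 z) := fun y hy ↦
    ((Real.continuousAt_rpow_const y (β + 1) (Or.inr (by positivity))).mul
      (hQ y ⟨hy.1, hy.2.trans_lt hz.2⟩).continuousAt).continuousWithinAt
  have hWz := eq_of_hasDerivAt_eq_zero_of_continuousOn hz.1 hcont
    fun y hy ↦ hW y ⟨hy.1, hy.2.trans hz.2⟩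
  simp only [Real.zero_rpow (by positivity : β + 1 ≠ 0), zero_mul] at hWz
  exact (mul_eq_zero.1 hWz).resolve_left (Real.rpow_pos_of_pos hz.1 _).ne'

theorem hasDerivAt_one_add_sqrt_div_two_rpow_mul_eq_zero {y : ℝ} (hy : y < 1)
    (hf : HasDerivAt f (f' y) y) (hP : β * f y - 2 * √(1 - y) * (1 + √(1 - y)) * f' y = 0) :
    HasDerivAt (fun y ↦ ((1 + √(1 - y)) / 2) ^ β * f y) 0 y := by
  have hs : 0 < √(1 - y) := Real.sqrt_pos.2 (by linarith)
  have hw : 0 < (1 + √(1 - y)) / 2 := by positivity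
  have hw' : HasDerivAt (fun y ↦ (1 + √(1 - y)) / 2) (-1 / (2 * √(1 - y)) / 2) y := by
    have := ((Real.hasDerivAt_sqrt (by linarith : 1 - y ≠ 0)).comp y
      ((hasDerivAt_id y).const_sub 1)).const_add 1 |>.div_const 2
    exact this.congr_deriv (by simp [div_eq_mul_inv])
  refine ((hw'.rpow_const (Or.inl hw.ne')).mul hf).congr_deriv ?_
  rw [Real.rpow_sub_one hw.ne']
  calc _ = -(((1 + √(1 - y)) / 2) ^ β / (2 * √(1 - y) * (1 + √(1 - y)))) *
        (β * f y - 2 * √(1 - y) * (1 + √(1 - y)) * f' y) := by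
        field_simp
        ring
    _ = 0 := by rw [hP, mul_zero]

theorem eventually_eq_rpow_of_hypergeometric_ode (hβ : 0 < β)
    (hf : ∀ z ∈ Ico (0 : ℝ) 1, HasDerivAt f (f' z) z)
    (hf' : ∀ z ∈ Ico (0 : ℝ) 1, HasDerivAt f' (f'' z) z)
    (hode : ∀ z ∈ Ioo (0 : ℝ) 1,
      z * (1 - z) * f'' z + (β + 1 - (β + 3 / 2) * z) * f' z - β * (β + 1) / 4 * f z = 0)
    (h0 : f 0 = 1) :
    ∀ᶠ z in 𝓝[>] 0, f z = ((1 + √(1 - z)) / 2) ^ (-β) := by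
  have hQ := quadratic_invariant_eq_zero_of_hypergeometric_ode hβ hf hf' hode
  -- the invariant is `P * R`, where `P = 0` is the first-order equation of the right-hand side
  set R : ℝ → ℝ := fun z ↦ β * f z - 2 * √(1 - z) * (√(1 - z) - 1) * f' z
  have hR : ContinuousAt R 0 := by
    have := (hf 0 ⟨le_rfl, one_pos⟩).continuousAt
    have := (hf' 0 ⟨le_rfl, one_pos⟩).continuousAt
    simp only [R]
    fun_prop
  have hR0 : 0 < R 0 := by simpa [R, h0] using hβ
  obtain ⟨ε, hε, hball⟩ := Metric.eventually_nhds_iff.1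
    ((hR.eventually (lt_mem_nhds hR0)).and (gt_mem_nhds one_pos))
  refine mem_of_superset (Ioo_mem_nhdsGT hε) fun z hz ↦ ?_
  have hG (y : ℝ) (hy : y ∈ Ioo 0 z) :
      HasDerivAt (fun y ↦ ((1 + √(1 - y)) / 2) ^ β * f y) 0 y := by
    obtain ⟨hRy, hy1⟩ : 0 < R y ∧ y < 1 := hball (by
      rw [Real.dist_eq, sub_zero, abs_of_pos hy.1]; exact hy.2.trans hz.2)
    refine hasDerivAt_one_add_sqrt_div_two_rpow_mul_eq_zero hy1 (hf y ⟨hy.1.le, hy1⟩) ?_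
    have hsq : √(1 - y) ^ 2 = 1 - y := Real.sq_sqrt (by linarith)
    have hPR : (β * f y - 2 * √(1 - y) * (1 + √(1 - y)) * f' y) * R y = 0 := by
      rw [← hQ y ⟨hy.1, hy1⟩]
      linear_combination (4 * (√(1 - y) ^ 2 - 1) * f' y ^ 2 - 4 * β * f y * f' y
        + 4 * (1 - y) * f' y ^ 2) * hsq
    exact (mul_eq_zero.1 hPR).resolve_right hRy.ne'
  have hz1 : z < 1 := (hball (by rw [Real.dist_eq, sub_zero, abs_of_pos hz.1]; exact hz.2)).2
  have hw (y : ℝ) : 0 < (1 + √(1 - y)) / 2 := by positivity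
  have hwc : Continuous fun y : ℝ ↦ (1 + √(1 - y)) / 2 := by fun_prop
  have hcont : ContinuousOn (fun y ↦ ((1 + √(1 - y)) / 2) ^ β * f y) (Icc 0 z) := fun y hy ↦
    ((hwc.continuousAt.rpow_const (Or.inl (hw y).ne')).mul
      (hf y ⟨hy.1, hy.2.trans_lt hz1⟩).continuousAt).continuousWithinAt
  have hGz := eq_of_hasDerivAt_eq_zero_of_continuousOn hz.1 hcont hG
  simp only [sub_zero, sqrt_one, add_self_div_two, one_rpow, h0, mul_one] at hGz
  show f z = ((1 + √(1 - z)) / 2) ^ (-β)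
  rw [Real.rpow_neg (hw z).le]
  exact eq_inv_of_mul_eq_one_right hGz

end HalfParameters

theorem ordinaryHypergeometric_eq_rpow_one_add_sqrt {β : ℝ} (hβ : 0 < β) {z : ℝ}
    (hz : |z| < 1) :
    ₂F₁ (β / 2) ((β + 1) / 2) (β + 1) z = ((1 + √(1 - z)) / 2) ^ (-β) := by
  set F : ℝ → ℝ := ₂F₁ (β / 2) ((β + 1) / 2) (β + 1)
  have habc : ∀ kn : ℕ, (kn : ℝ) ≠ -(β / 2) ∧ (kn : ℝ) ≠ -((β + 1) / 2) ∧ (kn : ℝ) ≠ -(β + 1) := by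
    intro k
    have := k.cast_nonneg (α := ℝ)
    refine ⟨?_, ?_, ?_⟩ <;> intro h <;> linarith
  have hF : AnalyticOnNhd ℝ F (Metric.ball 0 1) := by
    have := (ordinaryHypergeometricSeries ℝ (β / 2) ((β + 1) / 2) (β + 1)).analyticOnNhd
    rwa [ordinaryHypergeometricSeries_radius_eq_one ℝ _ _ _ habc, ← ENNReal.ofReal_one,
      Metric.eball_ofReal] at this
  have hφ : AnalyticOnNhd ℝ (fun z : ℝ ↦ ((1 + √(1 - z)) / 2) ^ (-β)) (Metric.ball 0 1) := by
    intro z hz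
    have hz1 : 0 < 1 - z := by linarith [(abs_lt.1 (mem_ball_zero_iff.1 hz)).2]
    have hs : ContDiffAt ℝ ⊤ (fun z : ℝ ↦ √(1 - z)) z :=
      (contDiffAt_const.sub contDiffAt_id).sqrt hz1.ne'
    exact ((contDiffAt_const.add hs).div_const _).rpow_const_of_ne (by positivity) |>.analyticAt
  have hmem (y : ℝ) (hy : y ∈ Ico (0 : ℝ) 1) : y ∈ Metric.ball (0 : ℝ) 1 := by
    rw [mem_ball_zero_iff, Real.norm_eq_abs, abs_of_nonneg hy.1]
    exact hy.2
  have hode (y : ℝ) (hy : y ∈ Ioo (0 : ℝ) 1) : y * (1 - y) * deriv (deriv F) y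
      + (β + 1 - (β + 3 / 2) * y) * deriv F y - β * (β + 1) / 4 * F y = 0 := by
    linear_combination ordinaryHypergeometric_ode habc
      (mem_ball_zero_iff.1 (hmem y (Ioo_subset_Ico_self hy)))
  have hev := eventually_eq_rpow_of_hypergeometric_ode hβ
    (fun y hy ↦ (hF y (hmem y hy)).differentiableAt.hasDerivAt)
    (fun y hy ↦ (hF.deriv y (hmem y hy)).differentiableAt.hasDerivAt) hode
    (ordinaryHypergeometric_zero _ _ _)
  refine hF.eqOn_of_preconnected_of_frequently_eq hφ (convex_ball 0 1).isPreconnected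
    (Metric.mem_ball_self one_pos) ?_ (mem_ball_zero_iff.2 hz)
  exact hev.frequently.filter_mono (nhdsWithin_mono _ fun y hy ↦ ne_of_gt hy)

theorem stmt_6 (β : ℝ) (hβ : 0 < β) (x : ℝ) (hx : |x| < 1) :
    (if x = 0 then (2 : ℝ) ^ (-β) else ((Real.sqrt (1 + x) - 1) / x) ^ β) =
      (2 : ℝ) ^ (-β) *
        ∑' k : ℕ, (ascPochhammer ℝ k).eval (β / 2) * (ascPochhammer ℝ k).eval ((β + 1) / 2) /
          ((ascPochhammer ℝ k).eval (β + 1) * (k.factorial : ℝ)) * (-x) ^ k := by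
  have hseries : (∑' k : ℕ, (ascPochhammer ℝ k).eval (β / 2) *
      (ascPochhammer ℝ k).eval ((β + 1) / 2) /
        ((ascPochhammer ℝ k).eval (β + 1) * (k.factorial : ℝ)) * (-x) ^ k) =
      ₂F₁ (β / 2) ((β + 1) / 2) (β + 1) (-x) := by
    rw [ordinaryHypergeometric_eq_tsum_mul]
    exact tsum_congr fun k ↦ by ring
  rw [hseries, ordinaryHypergeometric_eq_rpow_one_add_sqrt hβ (by rwa [abs_neg]), sub_neg_eq_add]
  split_ifs with hx0
  · simp [hx0]
  · have hdiv : (√(1 + x) - 1) / x = (1 + √(1 + x))⁻¹ := by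
      have : √(1 + x) ^ 2 = 1 + x := Real.sq_sqrt (by linarith [(abs_lt.1 hx).1])
      field_simp
      linear_combination this
    rw [hdiv, Real.inv_rpow (by positivity), ← Real.rpow_neg (by positivity),
      ← Real.mul_rpow (by norm_num) (by positivity), mul_div_cancel₀ _ two_ne_zero]
end

section
/- ∫₀^1 (arcsin(x)/x)³ dx = (3/2)·π·ln 2 − π³/16. -/
/-!
Substituting `x = sin θ` turns the integral into `∫₀^{π/2} θ³ cos θ / sin³ θ dθ`, and two
integrations by parts reduce this to `3 ∫₀^{π/2} log (sin θ) dθ = -(3π/2) log 2`. Concretely,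
`ArcsinDivCube.antideriv` is an explicit primitive of `θ³ cos θ / sin³ θ` wherever `sin θ ≠ 0`;
it tends to `0` as `θ → 0⁺` and equals `(3/2) π log 2 - π³/16` at `π/2`, so the fundamental
theorem of calculus applied to `antideriv ∘ arcsin` on `(0, 1)` gives the value.
-/

open Real MeasureTheory Set Filter Topology

noncomputable def integralLogSin (θ : ℝ) : ℝ := ∫ t in 0..θ, log (sin t)

lemma continuous_integralLogSin : Continuous integralLogSin :=
  intervalIntegral.continuous_primitive (fun _ _ => intervalIntegrable_log_sin) 0

lemma hasDerivAt_integralLogSin {θ : ℝ} (h : sin θ ≠ 0) :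
    HasDerivAt integralLogSin (log (sin θ)) θ :=
  intervalIntegral.integral_hasDerivAt_right intervalIntegrable_log_sin
    continuous_sin.measurable.log.stronglyMeasurable.stronglyMeasurableAtFilter
    ((continuousAt_log h).comp continuous_sin.continuousAt)

lemma continuous_dslope_arcsin_zero : Continuous (dslope arcsin 0) := by
  refine continuous_iff_continuousAt.2 fun x => ?_
  rcases eq_or_ne x 0 with rfl | hx
  · exact continuousAt_dslope_same.2 (differentiableAt_arcsin.2 (by norm_num))
  · exact (continuousAt_dslope_of_ne hx).2 continuous_arcsin.continuousAt

lemma dslope_arcsin_zero_of_ne {x : ℝ} (hx : x ≠ 0) : dslope arcsin 0 x = arcsin x / x := by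
  simp [dslope_of_ne _ hx, slope_def_field]

lemma tendsto_arcsin_nhdsGT_zero : Tendsto arcsin (𝓝[>] 0) (𝓝[>] 0) := by
  refine tendsto_nhdsWithin_of_tendsto_nhds_of_eventually_within _ ?_ ?_
  · simpa using continuous_arcsin.continuousWithinAt (s := Ioi 0) (x := 0) |>.tendsto
  · filter_upwards [self_mem_nhdsWithin] with x hx using arcsin_pos.2 hx

namespace ArcsinDivCube

noncomputable def antideriv (θ : ℝ) : ℝ :=
  -θ ^ 3 / (2 * sin θ ^ 2) - 3 / 2 * (θ ^ 2 * cos θ / sin θ) + 3 * θ * log (sin θ)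
    - 3 * integralLogSin θ

lemma hasDerivAt_antideriv {θ : ℝ} (h : sin θ ≠ 0) :
    HasDerivAt antideriv (θ ^ 3 * cos θ / sin θ ^ 3) θ := by
  have hsin := hasDerivAt_sin θ
  have hid := hasDerivAt_id' θ
  have H := ((((hid.fun_pow 3).fun_neg.fun_div ((hsin.fun_pow 2).const_mul 2) (by simp [h])).fun_sub
    (((hid.fun_pow 2).fun_mul (hasDerivAt_cos θ)).fun_div hsin h |>.const_mul (3 / 2))).fun_add
    ((hid.const_mul 3).fun_mul (hsin.log h))).fun_sub ((hasDerivAt_integralLogSin h).const_mul 3)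
  refine H.congr_deriv ?_
  field_simp
  linear_combination (3 * θ ^ 2 * sin θ ^ 2) * sin_sq_add_cos_sq θ

/-- Written with `sinc θ = sin θ / θ`, every term is visibly continuous at `θ = 0`. -/
lemma antideriv_eq_of_sin_ne_zero {θ : ℝ} (hθ : θ ≠ 0) (h : sin θ ≠ 0) :
    antideriv θ = -θ / (2 * sinc θ ^ 2) - 3 / 2 * (θ * cos θ / sinc θ)
      + 3 * (sin θ * log (sin θ)) / sinc θ - 3 * integralLogSin θ := by
  rw [antideriv, sinc_of_ne_zero hθ]
  field_simp

lemma tendsto_antideriv_zero : Tendsto antideriv (𝓝[>] 0) (𝓝 0) := by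
  set g : ℝ → ℝ := fun θ => -θ / (2 * sinc θ ^ 2) - 3 / 2 * (θ * cos θ / sinc θ)
      + 3 * (sin θ * log (sin θ)) / sinc θ - 3 * integralLogSin θ
  have hg : ContinuousAt g 0 := by
    have := continuous_sinc
    have := continuous_integralLogSin
    have := continuous_mul_log
    fun_prop (disch := simp)
  have hg0 : g 0 = 0 := by simp [g, integralLogSin]
  have hlim := hg.tendsto.mono_left (nhdsWithin_le_nhds (s := Ioi 0))
  rw [hg0] at hlim
  refine hlim.congr' ?_
  filter_upwards [Ioo_mem_nhdsGT pi_pos] with θ hθ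
  exact (antideriv_eq_of_sin_ne_zero hθ.1.ne' (sin_pos_of_pos_of_lt_pi hθ.1 hθ.2).ne').symm

lemma antideriv_pi_div_two : antideriv (π / 2) = 3 / 2 * π * log 2 - π ^ 3 / 16 := by
  simp only [antideriv, integralLogSin, integral_log_sin_zero_pi_div_two, sin_pi_div_two,
    cos_pi_div_two, log_one]
  ring

lemma hasDerivAt_antideriv_comp_arcsin {x : ℝ} (h₁ : -1 < x) (h₂ : x < 1) (h₀ : x ≠ 0) :
    HasDerivAt (antideriv ∘ arcsin) ((arcsin x / x) ^ 3) x := by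
  have hsin : sin (arcsin x) = x := sin_arcsin h₁.le h₂.le
  have hsqrt : 0 < √(1 - x ^ 2) := sqrt_pos.2 (by nlinarith)
  refine ((hasDerivAt_antideriv (by rwa [hsin])).comp x
    (hasDerivAt_arcsin h₁.ne' h₂.ne)).congr_deriv ?_
  rw [hsin, cos_arcsin]
  field_simp

lemma tendsto_antideriv_comp_arcsin_one :
    Tendsto (antideriv ∘ arcsin) (𝓝[<] 1) (𝓝 (antideriv (π / 2))) := by
  have hcont : ContinuousAt antideriv (arcsin 1) := by
    rw [arcsin_one]
    exact (hasDerivAt_antideriv (by simp)).continuousAt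
  rw [← arcsin_one]
  exact (hcont.comp continuous_arcsin.continuousAt).tendsto.mono_left nhdsWithin_le_nhds

end ArcsinDivCube

theorem stmt_8 :
    ∫ x in Set.Ioo (0 : ℝ) 1, (Real.arcsin x / x) ^ 3 =
      3 / 2 * π * Real.log 2 - π ^ 3 / 16 := by
  have hintegrable : IntervalIntegrable (fun x => (arcsin x / x) ^ 3) volume 0 1 :=
    (continuous_dslope_arcsin_zero.pow 3).intervalIntegrable 0 1 |>.congr_uIoo fun x hx => by
      rw [uIoo_of_le zero_le_one] at hx
      simp only [Pi.pow_apply, dslope_arcsin_zero_of_ne hx.1.ne']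
  rw [← integral_Ioc_eq_integral_Ioo, ← intervalIntegral.integral_of_le zero_le_one,
    intervalIntegral.integral_eq_sub_of_hasDerivAt_of_tendsto zero_lt_one
      (fun x hx => ArcsinDivCube.hasDerivAt_antideriv_comp_arcsin (by linarith [hx.1]) hx.2
        hx.1.ne') hintegrable
      (ArcsinDivCube.tendsto_antideriv_zero.comp tendsto_arcsin_nhdsGT_zero)
      ArcsinDivCube.tendsto_antideriv_comp_arcsin_one,
    ArcsinDivCube.antideriv_pi_div_two, sub_zero]
end

section
/- ∫₀^1 arctan(x)/x dx = (1/8)(ψ'(1/4) − π²), where ψ' is the trigamma function. -/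
open Real MeasureTheory Filter Topology Set

/-! Taking logarithms in Gauss's limit formula for `Γ` gives, for `x > 0`,
`log Γ(x) = -log x - γ x + ∑ₙ (x / (n + 1) - log (1 + x / (n + 1)))`. Differentiating twice
termwise yields `ψ'(x) = ∑ₙ 1 / (x + n)²`, so `ψ'(1/4) = 16 A` where `A = ∑ₖ 1 / (4k + 1)²`.
On the other side, integrating the power series of `arctan x / x` termwise gives
`∫₀¹ arctan x / x = ∑ₙ (-1)ⁿ / (2n + 1)² = A - B` with `B = ∑ₖ 1 / (4k + 3)²`, while
`A + B = π² / 8` follows from `ζ(2) = π² / 6`. Hence `(ψ'(1/4) - π²) / 8 = 2A - (A + B) = A - B`. -/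

noncomputable def weierstrassLogTerm (n : ℕ) (x : ℝ) : ℝ := x / (n + 1) - log (1 + x / (n + 1))

noncomputable def digammaTerm (n : ℕ) (x : ℝ) : ℝ := 1 / ((n : ℝ) + 1) - 1 / ((n : ℝ) + 1 + x)

section Terms

variable {n : ℕ} {x : ℝ}

lemma summable_one_div_nat_add_one_sq : Summable fun n : ℕ => 1 / ((n : ℝ) + 1) ^ 2 := by
  exact_mod_cast (summable_nat_add_iff 1).mpr (Real.summable_one_div_nat_pow.mpr one_lt_two)

lemma weierstrassLogTerm_nonneg (hx : 0 ≤ x) : 0 ≤ weierstrassLogTerm n x := by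
  have := log_le_sub_one_of_pos (show 0 < 1 + x / (n + 1) by positivity)
  rw [weierstrassLogTerm]
  linarith

lemma weierstrassLogTerm_le (hx : 0 ≤ x) :
    weierstrassLogTerm n x ≤ x ^ 2 / ((n : ℝ) + 1) ^ 2 := by
  set t := x / ((n : ℝ) + 1) with ht
  have ht0 : 0 ≤ t := by positivity
  have hlog := one_sub_inv_le_log_of_pos (show 0 < 1 + t by positivity)
  have hquot : t - (1 - (1 + t)⁻¹) = t ^ 2 / (1 + t) := by field_simp; ring
  have hle : t ^ 2 / (1 + t) ≤ t ^ 2 := div_le_self (sq_nonneg t) (by linarith)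
  calc weierstrassLogTerm n x = t - log (1 + t) := rfl
    _ ≤ t ^ 2 := by linarith
    _ = x ^ 2 / ((n : ℝ) + 1) ^ 2 := by rw [ht, div_pow]

lemma summable_weierstrassLogTerm (hx : 0 ≤ x) : Summable fun n => weierstrassLogTerm n x := by
  refine .of_nonneg_of_le (fun n => weierstrassLogTerm_nonneg hx)
    (fun n => weierstrassLogTerm_le hx) ?_
  simpa only [mul_one_div] using summable_one_div_nat_add_one_sq.mul_left (x ^ 2)

lemma abs_digammaTerm_le (hx : 0 ≤ x) : |digammaTerm n x| ≤ x * (1 / ((n : ℝ) + 1) ^ 2) := by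
  have hquot : digammaTerm n x = x / (((n : ℝ) + 1) * ((n : ℝ) + 1 + x)) := by
    rw [digammaTerm]; field_simp; ring
  rw [hquot, abs_of_nonneg (by positivity), mul_one_div, sq]
  exact div_le_div_of_nonneg_left hx (by positivity)
    (mul_le_mul_of_nonneg_left (by linarith) (by positivity))

lemma summable_digammaTerm (hx : 0 ≤ x) : Summable fun n => digammaTerm n x :=
  .of_norm_bounded (summable_one_div_nat_add_one_sq.mul_left x) fun _ => abs_digammaTerm_le hx

lemma hasDerivAt_weierstrassLogTerm (hx : 0 < x) :
    HasDerivAt (weierstrassLogTerm n) (digammaTerm n x) x := by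
  have hdiv : HasDerivAt (fun y : ℝ => y / (n + 1)) (1 / (n + 1)) x := by
    simpa using (hasDerivAt_id x).div_const ((n : ℝ) + 1)
  refine (hdiv.sub ((hdiv.const_add 1).log (by positivity))).congr_deriv ?_
  rw [digammaTerm]
  field_simp

lemma hasDerivAt_digammaTerm (hx : 0 < x) :
    HasDerivAt (digammaTerm n) (1 / ((n : ℝ) + 1 + x) ^ 2) x := by
  have hlin : HasDerivAt (fun y : ℝ => (n : ℝ) + 1 + y) 1 x := (hasDerivAt_id x).const_add _
  unfold digammaTerm
  simpa [one_div, neg_div] using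
    (hlin.inv (by positivity)).const_sub (1 / ((n : ℝ) + 1))

end Terms

lemma logGammaSeq_eq_sum_weierstrassLogTerm {x : ℝ} (hx : 0 < x) (n : ℕ) :
    BohrMollerup.logGammaSeq x n =
      -log x - x * ((harmonic n : ℝ) - log n) + ∑ i ∈ Finset.range n, weierstrassLogTerm i x := by
  have hterm (i : ℕ) : weierstrassLogTerm i x =
      x * (1 / ((i : ℝ) + 1)) - (log (x + (i + 1 : ℕ)) - log ((i + 1 : ℕ) : ℝ)) := by
    rw [weierstrassLogTerm, ← log_div (by positivity) (by positivity)]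
    congr 2
    · field_simp
    · push_cast
      field_simp
      ring
  have hfact : log (n.factorial : ℝ) = ∑ i ∈ Finset.range n, log ((i + 1 : ℕ) : ℝ) := by
    rw [← Finset.prod_range_add_one_eq_factorial, Nat.cast_prod,
      log_prod (fun i _ => by positivity)]
  simp only [BohrMollerup.logGammaSeq, hterm, Finset.sum_sub_distrib, ← Finset.mul_sum,
    Finset.sum_range_succ', hfact, harmonic]
  push_cast
  simp only [add_zero, one_div]
  ring

lemma log_Gamma_eq_tsum_weierstrassLogTerm {x : ℝ} (hx : 0 < x) :
    log (Gamma x) = -log x - eulerMascheroniConstant * x + ∑' n, weierstrassLogTerm n x := by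
  have hlim : Tendsto (BohrMollerup.logGammaSeq x) atTop
      (𝓝 (-log x - x * eulerMascheroniConstant + ∑' n, weierstrassLogTerm n x)) := by
    simp_rw [funext (logGammaSeq_eq_sum_weierstrassLogTerm hx)]
    exact (tendsto_const_nhds.sub (tendsto_harmonic_sub_log.const_mul x)).add
      (summable_weierstrassLogTerm hx.le).hasSum.tendsto_sum_nat
  rw [tendsto_nhds_unique (BohrMollerup.tendsto_log_gamma hx) hlim, mul_comm]

section Trigamma

variable {x : ℝ}

lemma hasDerivAt_tsum_weierstrassLogTerm (hx : 0 < x) :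
    HasDerivAt (fun y => ∑' n, weierstrassLogTerm n y) (∑' n, digammaTerm n x) x := by
  -- the bound `y / (n + 1)²` on the derivatives is only locally uniform in `y`
  have hbound (n : ℕ) (y : ℝ) (hy : y ∈ Ioo 0 (x + 1)) :
      ‖digammaTerm n y‖ ≤ (x + 1) * (1 / ((n : ℝ) + 1) ^ 2) :=
    (abs_digammaTerm_le hy.1.le).trans (by gcongr; exact hy.2.le)
  have hx_mem : x ∈ Ioo 0 (x + 1) := ⟨hx, by linarith⟩
  exact hasDerivAt_tsum_of_isPreconnected (summable_one_div_nat_add_one_sq.mul_left _) isOpen_Ioo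
    isPreconnected_Ioo (fun n y hy => hasDerivAt_weierstrassLogTerm hy.1) hbound hx_mem
    (summable_weierstrassLogTerm hx.le) hx_mem

lemma hasDerivAt_tsum_digammaTerm (hx : 0 < x) :
    HasDerivAt (fun y => ∑' n, digammaTerm n y) (∑' n : ℕ, 1 / ((n : ℝ) + 1 + x) ^ 2) x := by
  have hbound (n : ℕ) (y : ℝ) (hy : y ∈ Ioi 0) :
      ‖1 / ((n : ℝ) + 1 + y) ^ 2‖ ≤ 1 / ((n : ℝ) + 1) ^ 2 := by
    rw [Real.norm_eq_abs, abs_of_nonneg (by positivity)]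
    exact one_div_le_one_div_of_le (by positivity)
      (pow_le_pow_left₀ (by positivity) (by linarith [mem_Ioi.mp hy]) 2)
  exact hasDerivAt_tsum_of_isPreconnected summable_one_div_nat_add_one_sq isOpen_Ioi
    isPreconnected_Ioi (fun n y hy => hasDerivAt_digammaTerm hy) hbound hx
    (summable_digammaTerm hx.le) hx

lemma deriv_log_Gamma (hx : 0 < x) :
    deriv (fun y => log (Gamma y)) x =
      -x⁻¹ - eulerMascheroniConstant + ∑' n, digammaTerm n x := by
  have hev : (fun y => log (Gamma y)) =ᶠ[𝓝 x]
      fun y => -log y - eulerMascheroniConstant * y + ∑' n, weierstrassLogTerm n y :=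
    eventually_of_mem (isOpen_Ioi.mem_nhds hx) fun y hy => log_Gamma_eq_tsum_weierstrassLogTerm hy
  rw [hev.deriv_eq]
  refine ((((hasDerivAt_log hx.ne').neg).sub ((hasDerivAt_id x).const_mul _)).add
    (hasDerivAt_tsum_weierstrassLogTerm hx)).deriv.trans ?_
  simp

lemma deriv_deriv_log_Gamma (hx : 0 < x) :
    deriv (deriv fun y => log (Gamma y)) x = ∑' n : ℕ, 1 / (x + n) ^ 2 := by
  have hev : deriv (fun y => log (Gamma y)) =ᶠ[𝓝 x]
      fun y => -y⁻¹ - eulerMascheroniConstant + ∑' n, digammaTerm n y :=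
    eventually_of_mem (isOpen_Ioi.mem_nhds hx) fun y hy => deriv_log_Gamma hy
  have hsummable : Summable fun n : ℕ => 1 / (x + n) ^ 2 := by
    refine (summable_nat_add_iff 1).mp (.of_nonneg_of_le (fun n => by positivity) (fun n => ?_)
      summable_one_div_nat_add_one_sq)
    exact one_div_le_one_div_of_le (by positivity)
      (pow_le_pow_left₀ (by positivity) (by push_cast; linarith) 2)
  rw [hev.deriv_eq]
  refine ((((hasDerivAt_inv hx.ne').neg).sub_const _).add
    (hasDerivAt_tsum_digammaTerm hx)).deriv.trans ?_
  rw [hsummable.tsum_eq_zero_add]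
  congr 1
  · simp
  · exact tsum_congr fun n => by push_cast; ring

end Trigamma

lemma hasSum_neg_one_pow_mul_of_even_odd {R : Type*} [Ring R] [TopologicalSpace R]
    [IsTopologicalAddGroup R] {f : ℕ → R} {a b : R} (he : HasSum (fun k => f (2 * k)) a)
    (ho : HasSum (fun k => f (2 * k + 1)) b) : HasSum (fun n => (-1) ^ n * f n) (a - b) := by
  rw [sub_eq_add_neg]
  refine HasSum.even_add_odd ?_ ?_
  · simpa [pow_mul] using he
  · simpa [pow_succ, pow_mul] using ho.neg

lemma hasSum_one_div_two_mul_add_one_sq :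
    HasSum (fun k : ℕ => 1 / (2 * (k : ℝ) + 1) ^ 2) (π ^ 2 / 8) := by
  have heven : HasSum (fun k : ℕ => 1 / ((2 * k : ℕ) : ℝ) ^ 2) (1 / 4 * (π ^ 2 / 6)) :=
    (hasSum_zeta_two.mul_left _).congr_fun fun k => by push_cast; ring
  have hodd : Summable fun k : ℕ => 1 / ((2 * k + 1 : ℕ) : ℝ) ^ 2 :=
    hasSum_zeta_two.summable.comp_injective fun a b h => by simpa using h
  have hsum := hasSum_zeta_two.unique
    (HasSum.even_add_odd (f := fun n : ℕ => 1 / (n : ℝ) ^ 2) heven hodd.hasSum)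
  rw [show π ^ 2 / 8 = ∑' k : ℕ, 1 / ((2 * k + 1 : ℕ) : ℝ) ^ 2 by linarith]
  exact hodd.hasSum.congr_fun fun k => by push_cast; ring

lemma integral_Ioo_zero_one_pow (m : ℕ) : ∫ x in Ioo (0 : ℝ) 1, x ^ m = 1 / (m + 1) := by
  rw [Measure.restrict_congr_set Ioo_ae_eq_Ioc, ← intervalIntegral.integral_of_le zero_le_one,
    integral_pow]
  simp

lemma hasSum_arctan_div_self {x : ℝ} (hx : ‖x‖ < 1) (hx0 : x ≠ 0) :
    HasSum (fun n : ℕ => (-1) ^ n * x ^ (2 * n) / (2 * n + 1)) (arctan x / x) := by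
  refine ((Real.hasSum_arctan hx).div_const x).congr_fun fun n => ?_
  push_cast
  rw [pow_succ]
  field_simp

lemma integral_arctan_div_self :
    ∫ x in Ioo (0 : ℝ) 1, arctan x / x = ∑' n : ℕ, (-1) ^ n / (2 * (n : ℝ) + 1) ^ 2 := by
  set F : ℕ → ℝ → ℝ := fun n x => (-1) ^ n * x ^ (2 * n) / (2 * n + 1)
  have hF_integrable (n : ℕ) : IntegrableOn (F n) (Ioo 0 1) :=
    (Continuous.integrableOn_Icc (by fun_prop)).mono_set Ioo_subset_Icc_self
  have hF_integral (n : ℕ) : ∫ x in Ioo 0 1, F n x = (-1) ^ n / (2 * (n : ℝ) + 1) ^ 2 := by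
    simp only [F, integral_div, integral_const_mul, integral_Ioo_zero_one_pow]
    push_cast
    field_simp
  have hF_norm_integral (n : ℕ) : ∫ x in Ioo 0 1, ‖F n x‖ = 1 / (2 * (n : ℝ) + 1) ^ 2 := by
    rw [setIntegral_congr_fun measurableSet_Ioo (g := fun x : ℝ => x ^ (2 * n) / (2 * n + 1))
      fun x hx => by simp [F, abs_of_pos hx.1, abs_of_pos (by positivity : (0 : ℝ) < 2 * n + 1)]]
    simp only [integral_div, integral_Ioo_zero_one_pow]
    push_cast
    field_simp
  rw [setIntegral_congr_fun measurableSet_Ioo fun x hx =>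
      (hasSum_arctan_div_self (by rw [norm_of_nonneg hx.1.le]; exact hx.2) hx.1.ne').tsum_eq.symm,
    ← integral_tsum_of_summable_integral_norm hF_integrable
      (by simpa only [hF_norm_integral] using hasSum_one_div_two_mul_add_one_sq.summable)]
  exact tsum_congr hF_integral

/-- `∫₀¹ arctan x / x dx = (ψ'(1/4) − π²)/8`, where `ψ'` is the trigamma function,
i.e. the second derivative of `log ∘ Γ`. -/
theorem stmt_9 :
    ∫ x in Set.Ioo (0 : ℝ) 1, Real.arctan x / x =
      1 / 8 * (deriv (deriv fun y : ℝ => Real.log (Real.Gamma y)) (1 / 4) - π ^ 2) := by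
  set f : ℕ → ℝ := fun n => 1 / (2 * (n : ℝ) + 1) ^ 2
  have hf : HasSum f (π ^ 2 / 8) := hasSum_one_div_two_mul_add_one_sq
  obtain ⟨A, hA⟩ : Summable fun k => f (2 * k) :=
    hf.summable.comp_injective (mul_right_injective₀ two_ne_zero)
  obtain ⟨B, hB⟩ : Summable fun k => f (2 * k + 1) :=
    hf.summable.comp_injective fun a b h => by simpa using h
  have hAB : A + B = π ^ 2 / 8 := (hA.even_add_odd hB).unique hf
  have htrigamma : deriv (deriv fun y : ℝ => log (Gamma y)) (1 / 4) = 16 * A := by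
    rw [deriv_deriv_log_Gamma (by norm_num), ← hA.tsum_eq, ← tsum_mul_left]
    exact tsum_congr fun k => by simp only [f]; push_cast; field_simp; ring
  have hcatalan : ∑' n : ℕ, (-1) ^ n / (2 * (n : ℝ) + 1) ^ 2 = A - B := by
    simpa only [f, mul_one_div] using (hasSum_neg_one_pow_mul_of_even_odd hA hB).tsum_eq
  rw [integral_arctan_div_self, hcatalan, htrigamma]
  linarith
end

section
/- For real a, b and x < 1, Σ_{k≥0} d/dε[(a+ε)_k (b+ε)_k]|_{ε=0} / ((a+b)_k k!) · x^k = ln(1/(1−x)) · Σ_{k≥0} (a)_k (b)_k / ((a+b)_k k!) · x^k, provided a, b, a+b avoid non-positive integers and both series converge. -/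
/-!
Write `c k` for the coefficients of `₂F₁(a, b; a + b; x)` and `D k` for the coefficients of the
left-hand side. By the product rule, `D` satisfies the first-order recurrence
`(a + b + k) (k + 1) D (k + 1) = (a + k) (b + k) D k + (a + b + 2k) c k`, and a telescoping
computation shows that the Cauchy-product coefficients `∑_{i<k} c i / (k - i)` of
`log (1 / (1 - x)) · ₂F₁(a, b; a + b; x)` satisfy the same recurrence with the same initial value
`0`. So the two series agree termwise, and the identity is the Cauchy product of two absolutely
convergent series once `|x| < 1`, which follows from the summability of `∑ c k x ^ k`:
Euler's limit formula for `Γ` gives `k c k → Γ(a + b) / (Γ a Γ b) ≠ 0`, so `∑ |c k|`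
diverges.
-/

open Real Polynomial Filter Topology Finset

theorem ascPochhammer_eval_eq_prod_range {R : Type*} [CommSemiring R] (n : ℕ) (r : R) :
    (ascPochhammer R n).eval r = ∏ j ∈ range n, (r + j) := by
  induction n with
  | zero => simp
  | succ n ih => rw [ascPochhammer_succ_eval, ih, prod_range_succ]

theorem ascPochhammer_eval_ne_zero {t : ℝ} (ht : ∀ n : ℕ, t ≠ -n) (k : ℕ) :
    (ascPochhammer ℝ k).eval t ≠ 0 := by
  rw [Ne, ascPochhammer_eval_eq_zero_iff]
  rintro ⟨n, -, hn⟩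
  exact ht n (by linarith)

theorem Real.GammaSeq_eq_div_ascPochhammer (s : ℝ) (n : ℕ) :
    GammaSeq s n = (n : ℝ) ^ s * n.factorial / (ascPochhammer ℝ (n + 1)).eval s := by
  rw [GammaSeq, ascPochhammer_eval_eq_prod_range]

theorem ordinaryHypergeometricCoefficient_eq_div (a b c : ℝ) (n : ℕ) :
    ordinaryHypergeometricCoefficient a b c n =
      (ascPochhammer ℝ n).eval a * (ascPochhammer ℝ n).eval b /
        ((ascPochhammer ℝ n).eval c * (n.factorial : ℝ)) := by
  rw [ordinaryHypergeometricCoefficient]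
  ring

theorem ordinaryHypergeometricCoefficient_succ {a b c : ℝ} (hc : ∀ n : ℕ, c ≠ -n) (k : ℕ) :
    (c + k) * (k + 1) * ordinaryHypergeometricCoefficient a b c (k + 1) =
      (a + k) * (b + k) * ordinaryHypergeometricCoefficient a b c k := by
  have := ascPochhammer_eval_ne_zero hc k
  have : c + k ≠ 0 := fun h => hc k (by linarith)
  simp only [ordinaryHypergeometricCoefficient_eq_div, ascPochhammer_succ_eval, Nat.factorial_succ]
  push_cast
  field_simp

theorem natCast_succ_mul_ordinaryHypergeometricCoefficient_succ {a b : ℝ}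
    (ha : ∀ n : ℕ, a ≠ -n) (hb : ∀ n : ℕ, b ≠ -n) (hab : ∀ n : ℕ, a + b ≠ -n)
    {n : ℕ} (hn : n ≠ 0) :
    (n + 1 : ℝ) * ordinaryHypergeometricCoefficient a b (a + b) (n + 1) =
      GammaSeq (a + b) n / (GammaSeq a n * GammaSeq b n) := by
  have hn' : (0 : ℝ) < n := by positivity
  have := ascPochhammer_eval_ne_zero ha (n + 1)
  have := ascPochhammer_eval_ne_zero hb (n + 1)
  have := ascPochhammer_eval_ne_zero hab (n + 1)
  simp only [GammaSeq_eq_div_ascPochhammer, rpow_add hn', ordinaryHypergeometricCoefficient_eq_div,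
    Nat.factorial_succ]
  push_cast
  field_simp

theorem tendsto_natCast_mul_ordinaryHypergeometricCoefficient {a b : ℝ}
    (ha : ∀ n : ℕ, a ≠ -n) (hb : ∀ n : ℕ, b ≠ -n) (hab : ∀ n : ℕ, a + b ≠ -n) :
    Tendsto (fun n : ℕ => n * ordinaryHypergeometricCoefficient a b (a + b) n) atTop
      (𝓝 (Gamma (a + b) / (Gamma a * Gamma b))) := by
  rw [← tendsto_add_atTop_iff_nat 1]
  refine ((GammaSeq_tendsto_Gamma _).div ((GammaSeq_tendsto_Gamma a).mul
    (GammaSeq_tendsto_Gamma b)) (mul_ne_zero (Gamma_ne_zero ha) (Gamma_ne_zero hb))).congr' ?_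
  filter_upwards [eventually_ne_atTop 0] with n hn
  push_cast
  exact (natCast_succ_mul_ordinaryHypergeometricCoefficient_succ ha hb hab hn).symm

theorem not_summable_of_tendsto_natCast_mul {u : ℕ → ℝ} {L : ℝ} (hL : L ≠ 0)
    (hu : Tendsto (fun n : ℕ => n * u n) atTop (𝓝 L)) : ¬Summable u := by
  intro hsum
  have hinv : (fun n : ℕ => (n * u n)⁻¹) =O[atTop] fun _ => (1 : ℝ) :=
    (hu.inv₀ hL).isBigO_one ℝ
  have hbig := hinv.mul (Asymptotics.isBigO_refl u atTop)
  simp only [one_mul] at hbig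
  have heq : (fun n : ℕ => (n * u n)⁻¹ * u n) =ᶠ[atTop] fun n : ℕ => (n : ℝ)⁻¹ := by
    filter_upwards [hu.eventually_ne hL] with n hn
    rw [mul_inv, mul_assoc, inv_mul_cancel₀ (right_ne_zero_of_mul hn), mul_one]
  exact not_summable_natCast_inv (summable_of_isBigO_nat hsum (hbig.congr' heq .rfl))

theorem abs_lt_one_of_summable_ordinaryHypergeometricCoefficient_mul_pow {a b x : ℝ}
    (ha : ∀ n : ℕ, a ≠ -n) (hb : ∀ n : ℕ, b ≠ -n) (hab : ∀ n : ℕ, a + b ≠ -n)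
    (hsum : Summable fun k => ordinaryHypergeometricCoefficient a b (a + b) k * x ^ k) :
    |x| < 1 := by
  by_contra! hx
  refine not_summable_of_tendsto_natCast_mul
    (div_ne_zero (Gamma_ne_zero hab) (mul_ne_zero (Gamma_ne_zero ha) (Gamma_ne_zero hb)))
    (tendsto_natCast_mul_ordinaryHypergeometricCoefficient ha hb hab)
    (hsum.abs.of_norm_bounded fun k => ?_)
  rw [Real.norm_eq_abs, abs_mul _ (x ^ k), abs_pow]
  exact le_mul_of_one_le_right (abs_nonneg _) (one_le_pow₀ hx)

theorem eq_of_linear_recurrence {R : Type*} [Ring R] [NoZeroDivisors R] {p q r u v : ℕ → R}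
    (hp : ∀ k, p k ≠ 0) (hu : ∀ k, p k * u (k + 1) = q k * u k + r k)
    (hv : ∀ k, p k * v (k + 1) = q k * v k + r k) (h0 : u 0 = v 0) : u = v := by
  funext k
  induction k with
  | zero => exact h0
  | succ k ih => exact mul_left_cancel₀ (hp k) (by rw [hu, hv, ih])

theorem deriv_ascPochhammer_mul_succ (a b : ℝ) (k : ℕ) :
    deriv (fun ε : ℝ => (ascPochhammer ℝ (k + 1)).eval (a + ε) *
        (ascPochhammer ℝ (k + 1)).eval (b + ε)) 0 =
      (a + k) * (b + k) * deriv (fun ε : ℝ => (ascPochhammer ℝ k).eval (a + ε) *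
        (ascPochhammer ℝ k).eval (b + ε)) 0 +
      (a + b + 2 * k) * ((ascPochhammer ℝ k).eval a * (ascPochhammer ℝ k).eval b) := by
  have hsplit : (fun ε : ℝ => (ascPochhammer ℝ (k + 1)).eval (a + ε) *
      (ascPochhammer ℝ (k + 1)).eval (b + ε)) = fun ε => ((ascPochhammer ℝ k).eval (a + ε) *
        (ascPochhammer ℝ k).eval (b + ε)) * ((a + ε + k) * (b + ε + k)) := by
    funext ε
    simp only [ascPochhammer_succ_eval]
    ring
  have hquad : HasDerivAt (fun ε : ℝ => (a + ε + k) * (b + ε + k)) (a + b + 2 * k) 0 :=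
    ((((hasDerivAt_id' (0 : ℝ)).const_add a).add_const (k : ℝ)).fun_mul
      (((hasDerivAt_id' (0 : ℝ)).const_add b).add_const (k : ℝ))).congr_deriv (by ring)
  rw [hsplit, deriv_fun_mul (by fun_prop) hquad.differentiableAt, hquad.deriv]
  simp only [add_zero]
  ring

/-- The `x ^ n`-coefficient of `log (1 / (1 - x)) * ∑ u k x ^ k`. -/
noncomputable def logConvCoeff (u : ℕ → ℝ) (n : ℕ) : ℝ :=
  ∑ i ∈ range n, u i / ((n : ℝ) - i)

theorem logConvCoeff_succ {a b : ℝ} {u : ℕ → ℝ}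
    (hu : ∀ k : ℕ, (a + b + k) * (k + 1) * u (k + 1) = (a + k) * (b + k) * u k) (k : ℕ) :
    (a + b + k) * (k + 1) * logConvCoeff u (k + 1) =
      (a + k) * (b + k) * logConvCoeff u k + (a + b + 2 * k) * u k := by
  -- For `i < k`, the `i`-th summands of the two sides differ by `t i - t (i + 1)`.
  set t : ℕ → ℝ := fun i => u i * (i * (a + b + i - 1)) / ((k : ℝ) + 1 - i) with ht
  have hterm : ∀ i ∈ range k, (a + b + k) * (k + 1) * (u i / ((k + 1 : ℕ) - i)) =
      (t i - t (i + 1)) + (a + k) * (b + k) * (u i / ((k : ℝ) - i)) := by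
    intro i hi
    have hik : (i : ℝ) + 1 ≤ k := by exact_mod_cast mem_range.mp hi
    have h1 : (k : ℝ) - i ≠ 0 := by linarith
    have h2 : (k : ℝ) + 1 - i ≠ 0 := by linarith
    have hti : t (i + 1) = (a + i) * (b + i) * u i / ((k : ℝ) - i) := by
      rw [ht, ← hu i]
      push_cast
      rw [show (k : ℝ) + 1 - (i + 1) = k - i by ring]
      ring
    rw [hti, ht]
    push_cast
    field_simp
    ring
  have ht0 : t 0 = 0 := by simp [ht]
  have htk : t k = u k * (k * (a + b + k - 1)) := by simp [ht]
  calc (a + b + k) * (k + 1) * logConvCoeff u (k + 1)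
      = ∑ i ∈ range k, ((t i - t (i + 1)) + (a + k) * (b + k) * (u i / ((k : ℝ) - i))) +
          (a + b + k) * (k + 1) * u k := by
        rw [logConvCoeff, mul_sum, sum_range_succ, sum_congr rfl hterm]
        push_cast
        rw [show (k : ℝ) + 1 - k = 1 by ring, div_one]
    _ = (a + k) * (b + k) * logConvCoeff u k + (a + b + 2 * k) * u k := by
        rw [sum_add_distrib, sum_range_sub', ht0, htk, logConvCoeff, mul_sum]
        ring

theorem deriv_ascPochhammer_mul_div_eq_logConvCoeff {a b : ℝ} (hab : ∀ n : ℕ, a + b ≠ -n)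
    (k : ℕ) :
    deriv (fun ε : ℝ => (ascPochhammer ℝ k).eval (a + ε) * (ascPochhammer ℝ k).eval (b + ε)) 0 /
        ((ascPochhammer ℝ k).eval (a + b) * (k.factorial : ℝ)) =
      logConvCoeff (ordinaryHypergeometricCoefficient a b (a + b)) k := by
  have habk : ∀ k : ℕ, a + b + k ≠ 0 := fun k h => hab k (by linarith)
  refine congrFun (eq_of_linear_recurrence (u := fun k => deriv (fun ε : ℝ =>
      (ascPochhammer ℝ k).eval (a + ε) * (ascPochhammer ℝ k).eval (b + ε)) 0 /
        ((ascPochhammer ℝ k).eval (a + b) * (k.factorial : ℝ)))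
    (fun k => mul_ne_zero (habk k) k.cast_add_one_ne_zero) (fun k => ?_)
    (logConvCoeff_succ (ordinaryHypergeometricCoefficient_succ hab)) (by simp [logConvCoeff])) k
  have := ascPochhammer_eval_ne_zero hab k
  have := habk k
  rw [deriv_ascPochhammer_mul_succ, ordinaryHypergeometricCoefficient_eq_div]
  simp only [ascPochhammer_succ_eval, Nat.factorial_succ]
  push_cast
  field_simp

theorem hasSum_pow_div_natCast {x : ℝ} (hx : |x| < 1) :
    HasSum (fun n : ℕ => x ^ n / n) (log (1 / (1 - x))) := by
  -- The junk value `x ^ 0 / 0 = 0` is the correct constant term.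
  rw [one_div, log_inv, ← hasSum_nat_add_iff' 1]
  simpa using hasSum_pow_div_log_of_abs_lt_one hx

theorem tsum_logConvCoeff_mul_pow {u : ℕ → ℝ} {x : ℝ} (hx : |x| < 1)
    (hu : Summable fun k => u k * x ^ k) :
    ∑' n, logConvCoeff u n * x ^ n = log (1 / (1 - x)) * ∑' k, u k * x ^ k := by
  have hlog := hasSum_pow_div_natCast hx
  rw [← hlog.tsum_eq, mul_comm,
    tsum_mul_tsum_eq_tsum_sum_antidiagonal_of_summable_norm hu.norm hlog.summable.norm]
  refine tsum_congr fun n => ?_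
  rw [Nat.sum_antidiagonal_eq_sum_range_succ_mk, sum_range_succ, logConvCoeff, sum_mul]
  simp only [Nat.sub_self, Nat.cast_zero, div_zero, mul_zero, add_zero]
  refine sum_congr rfl fun i hi => ?_
  rw [Nat.cast_sub (mem_range.mp hi).le, ← pow_mul_pow_sub x (mem_range.mp hi).le]
  ring

theorem stmt_10_general (a b x : ℝ)
    (ha : ∀ n : ℕ, a ≠ -(n : ℝ)) (hb : ∀ n : ℕ, b ≠ -(n : ℝ))
    (hab : ∀ n : ℕ, a + b ≠ -(n : ℝ))
    (h2 : Summable fun k : ℕ =>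
      (ascPochhammer ℝ k).eval a * (ascPochhammer ℝ k).eval b /
        ((ascPochhammer ℝ k).eval (a + b) * (k.factorial : ℝ)) * x ^ k) :
    (∑' k : ℕ,
      deriv (fun ε : ℝ => (ascPochhammer ℝ k).eval (a + ε) * (ascPochhammer ℝ k).eval (b + ε)) 0 /
        ((ascPochhammer ℝ k).eval (a + b) * (k.factorial : ℝ)) * x ^ k) =
    Real.log (1 / (1 - x)) *
      ∑' k : ℕ, (ascPochhammer ℝ k).eval a * (ascPochhammer ℝ k).eval b /
        ((ascPochhammer ℝ k).eval (a + b) * (k.factorial : ℝ)) * x ^ k := by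
  simp only [← ordinaryHypergeometricCoefficient_eq_div,
    deriv_ascPochhammer_mul_div_eq_logConvCoeff hab] at h2 ⊢
  exact tsum_logConvCoeff_mul_pow
    (abs_lt_one_of_summable_ordinaryHypergeometricCoefficient_mul_pow ha hb hab h2) h2

/-- `[ε] ₂F₁(a+ε, b+ε; a+b; x) = ln(1/(1−x)) · ₂F₁(a, b; a+b; x)` for `x < 1`. -/
theorem stmt_10 (a b x : ℝ) (hx : x < 1)
    (ha : ∀ n : ℕ, a ≠ -(n : ℝ)) (hb : ∀ n : ℕ, b ≠ -(n : ℝ))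
    (hab : ∀ n : ℕ, a + b ≠ -(n : ℝ))
    (h1 : Summable fun k : ℕ =>
      deriv (fun ε : ℝ => (ascPochhammer ℝ k).eval (a + ε) * (ascPochhammer ℝ k).eval (b + ε)) 0 /
        ((ascPochhammer ℝ k).eval (a + b) * (k.factorial : ℝ)) * x ^ k)
    (h2 : Summable fun k : ℕ =>
      (ascPochhammer ℝ k).eval a * (ascPochhammer ℝ k).eval b /
        ((ascPochhammer ℝ k).eval (a + b) * (k.factorial : ℝ)) * x ^ k) :
    (∑' k : ℕ,
      deriv (fun ε : ℝ => (ascPochhammer ℝ k).eval (a + ε) * (ascPochhammer ℝ k).eval (b + ε)) 0 /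
        ((ascPochhammer ℝ k).eval (a + b) * (k.factorial : ℝ)) * x ^ k) =
    Real.log (1 / (1 - x)) *
      ∑' k : ℕ, (ascPochhammer ℝ k).eval a * (ascPochhammer ℝ k).eval b /
        ((ascPochhammer ℝ k).eval (a + b) * (k.factorial : ℝ)) * x ^ k :=
  stmt_10_general a b x ha hb hab h2
end

section
/- Let φ_α(x) = 1 + 4α² x²/(1+x²)². Then for α > 0, ∫₀^∞ (1+x²)^{−3/2} / √(φ_α(x) + √(φ_α(x)³)) dx = arctan(α)/(√2 · α). -/
/-!
Put `r = √((1 + x²)² + 4a²x²)` and `s = √(1 + x² + r)`. Then `φ_a(x) = (r / (1 + x²))²`, so the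
integrand simplifies to `1 / (r s)`, which is the derivative of `arctan (√2 a x / s) / (√2 a)`.
This primitive vanishes at `0`, and since `s(1/x) = s(x)/x` it tends to `arctan a / (√2 a)` at
infinity.
-/

open Real MeasureTheory Filter Topology

namespace ArctanIntegral

lemma sqrt_sq_add_sqrt_pow_three {c : ℝ} (hc : 0 ≤ c) :
    √(c ^ 2 + √((c ^ 2) ^ 3)) = c * √(1 + c) := by
  rw [← pow_mul, show c ^ (2 * 3) = (c ^ 3) ^ 2 by ring, Real.sqrt_sq (by positivity),
    show c ^ 2 + c ^ 3 = c ^ 2 * (1 + c) by ring, Real.sqrt_mul (by positivity), Real.sqrt_sq hc]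

-- `modulus a x = |1 + x² + 2iax|`
noncomputable def modulus (a x : ℝ) : ℝ := √((1 + x ^ 2) ^ 2 + 4 * a ^ 2 * x ^ 2)

noncomputable def sqrtSum (a x : ℝ) : ℝ := √(1 + x ^ 2 + modulus a x)

variable (a : ℝ)

lemma modulus_pos (x : ℝ) : 0 < modulus a x := Real.sqrt_pos.mpr (by positivity)

lemma sq_modulus (x : ℝ) : modulus a x ^ 2 = (1 + x ^ 2) ^ 2 + 4 * a ^ 2 * x ^ 2 :=
  Real.sq_sqrt (by positivity)

lemma sqrtSum_pos (x : ℝ) : 0 < sqrtSum a x :=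
  Real.sqrt_pos.mpr (by have := modulus_pos a x; positivity)

lemma sq_sqrtSum (x : ℝ) : sqrtSum a x ^ 2 = 1 + x ^ 2 + modulus a x :=
  Real.sq_sqrt (by have := modulus_pos a x; positivity)

lemma sqrtSum_zero : sqrtSum a 0 = √2 := by
  norm_num [sqrtSum, modulus]

lemma continuous_sqrtSum : Continuous (sqrtSum a) := by
  unfold sqrtSum modulus
  fun_prop

lemma modulus_inv {x : ℝ} (hx : 0 < x) : modulus a x⁻¹ = modulus a x / x ^ 2 := by
  have h : (1 + x⁻¹ ^ 2) ^ 2 + 4 * a ^ 2 * x⁻¹ ^ 2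
      = ((1 + x ^ 2) ^ 2 + 4 * a ^ 2 * x ^ 2) / (x ^ 2) ^ 2 := by
    field_simp
    ring
  rw [modulus, modulus, h, Real.sqrt_div' _ (by positivity), Real.sqrt_sq (by positivity)]

lemma sqrtSum_inv {x : ℝ} (hx : 0 < x) : sqrtSum a x⁻¹ = sqrtSum a x / x := by
  have h : 1 + x⁻¹ ^ 2 + modulus a x / x ^ 2 = (1 + x ^ 2 + modulus a x) / x ^ 2 := by
    field_simp
    ring
  rw [sqrtSum, sqrtSum, modulus_inv a hx, h, Real.sqrt_div' _ (by positivity), Real.sqrt_sq hx.le]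

lemma integrand_eq_one_div_modulus_mul_sqrtSum (x : ℝ) :
    (1 + x ^ 2) ^ (-(3 : ℝ) / 2) /
        √((1 + 4 * a ^ 2 * x ^ 2 / (1 + x ^ 2) ^ 2) +
          √((1 + 4 * a ^ 2 * x ^ 2 / (1 + x ^ 2) ^ 2) ^ 3)) =
      1 / (modulus a x * sqrtSum a x) := by
  have hA : 0 < 1 + x ^ 2 := by positivity
  have hr := modulus_pos a x
  have hφ : 1 + 4 * a ^ 2 * x ^ 2 / (1 + x ^ 2) ^ 2 = (modulus a x / (1 + x ^ 2)) ^ 2 := by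
    rw [div_pow, sq_modulus]
    field_simp
  have hs : sqrtSum a x = √(1 + x ^ 2) * √(1 + modulus a x / (1 + x ^ 2)) := by
    rw [← Real.sqrt_mul hA.le, mul_add, mul_div_cancel₀ _ hA.ne', mul_one, sqrtSum]
  have hpow : (1 + x ^ 2) ^ (-(3 : ℝ) / 2) = ((1 + x ^ 2) * √(1 + x ^ 2))⁻¹ := by
    rw [Real.sqrt_eq_rpow, ← Real.rpow_one_add' hA.le (by norm_num), ← Real.rpow_neg hA.le]
    norm_num
  have hsA : 0 < √(1 + x ^ 2) := Real.sqrt_pos.mpr hA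
  rw [hφ, sqrt_sq_add_sqrt_pow_three (by positivity), hpow, hs]
  field_simp

lemma hasDerivAt_modulus (x : ℝ) :
    HasDerivAt (modulus a) (2 * x * (1 + x ^ 2 + 2 * a ^ 2) / modulus a x) x := by
  have h := (((hasDerivAt_pow 2 x).const_add 1).fun_pow 2).fun_add
    ((hasDerivAt_pow 2 x).const_mul (4 * a ^ 2))
  refine (h.sqrt (by positivity)).congr_deriv ?_
  rw [← modulus]
  field_simp
  ring

lemma hasDerivAt_sqrtSum (x : ℝ) :
    HasDerivAt (sqrtSum a)
      (x * (sqrtSum a x ^ 2 + 2 * a ^ 2) / (modulus a x * sqrtSum a x)) x := by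
  have h := ((hasDerivAt_pow 2 x).const_add 1).fun_add (hasDerivAt_modulus a x)
  have := modulus_pos a x
  refine (h.sqrt (by positivity)).congr_deriv ?_
  rw [← sqrtSum, sq_sqrtSum]
  field_simp
  ring

noncomputable def primitive (a x : ℝ) : ℝ := arctan (√2 * a * x / sqrtSum a x) / (√2 * a)

lemma hasDerivAt_primitive {a : ℝ} (ha : a ≠ 0) (x : ℝ) :
    HasDerivAt (primitive a) (1 / (modulus a x * sqrtSum a x)) x := by
  have hr := modulus_pos a x
  have hs := sqrtSum_pos a x
  have h2 : √2 ^ 2 = 2 := Real.sq_sqrt zero_le_two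
  have hsq : sqrtSum a x ^ 2 * (modulus a x - x ^ 2 - 1) = 4 * a ^ 2 * x ^ 2 := by
    rw [sq_sqrtSum]
    linear_combination sq_modulus a x
  have h := ((((hasDerivAt_id' x).const_mul (√2 * a)).fun_div (hasDerivAt_sqrtSum a x)
    hs.ne').arctan).div_const (√2 * a)
  refine h.congr_deriv ?_
  rw [div_pow, mul_pow, mul_pow, h2]
  field_simp
  linear_combination hsq

lemma tendsto_primitive_atTop :
    Tendsto (primitive a) atTop (𝓝 (arctan a / (√2 * a))) := by
  have hs : Tendsto (fun x : ℝ => sqrtSum a x⁻¹) atTop (𝓝 (√2)) := by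
    rw [← sqrtSum_zero a]
    exact ((continuous_sqrtSum a).tendsto 0).comp tendsto_inv_atTop_zero
  have h := ((Real.continuous_arctan.tendsto _).comp
    ((tendsto_const_nhds (x := √2 * a)).div hs (by positivity))).div_const (√2 * a)
  rw [mul_div_cancel_left₀ _ (by positivity)] at h
  refine h.congr' ?_
  filter_upwards [eventually_gt_atTop 0] with x hx
  simp only [Function.comp_apply, Pi.div_apply]
  rw [primitive, sqrtSum_inv a hx, div_div_eq_mul_div]

end ArctanIntegral

open ArctanIntegral in
theorem stmt_14 (α : ℝ) (hα : 0 < α) :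
    ∫ x in Set.Ioi (0 : ℝ),
        (1 + x ^ 2) ^ (-(3 : ℝ) / 2) /
          Real.sqrt ((1 + 4 * α ^ 2 * x ^ 2 / (1 + x ^ 2) ^ 2) +
            Real.sqrt ((1 + 4 * α ^ 2 * x ^ 2 / (1 + x ^ 2) ^ 2) ^ 3)) =
      Real.arctan α / (Real.sqrt 2 * α) := by
  simp_rw [integrand_eq_one_div_modulus_mul_sqrtSum]
  have hprim := integral_Ioi_of_hasDerivAt_of_nonneg' (a := 0)
    (fun x _ => hasDerivAt_primitive hα.ne' x)
    (fun x _ => by have := modulus_pos α x; have := sqrtSum_pos α x; positivity)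
    (tendsto_primitive_atTop α)
  rw [hprim, primitive]
  simp
end

section
/- Let φ(x) = 1 + (4/3) x²/(1+x²)². Then ∫₀^∞ (1+x²)^{−3/2} / √(φ(x) + √(φ(x)³)) dx = π/(2√6). -/
/-!
Put `w = √(9x⁴ + 30x² + 9) = 3(1 + x²)√φ`. Then `φ + φ^{3/2} = φ(1 + √φ)` is a perfect square
of an expression in `w` and `√(3 + 3x² + w)`, and the integrand collapses to
`3√3 / (w √(3 + 3x² + w))`. This has the elementary primitive
`(√6/2) arctan(√2 x / √(3 + 3x² + w))`, which vanishes at `0`; its arctan argument tends to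
`1/√3`, so the integral is `(√6/2)(π/6) = π/(2√6)`.
-/

open Real MeasureTheory Filter Topology

noncomputable def quarticRoot (x : ℝ) : ℝ := √(9 * x ^ 4 + 30 * x ^ 2 + 9)

noncomputable def outerRoot (x : ℝ) : ℝ := √(3 + 3 * x ^ 2 + quarticRoot x)

noncomputable def antideriv (x : ℝ) : ℝ := √6 / 2 * arctan (√2 * x / outerRoot x)

lemma quarticRoot_pos (x : ℝ) : 0 < quarticRoot x := sqrt_pos.2 (by positivity)

lemma quarticRoot_sq (x : ℝ) : quarticRoot x ^ 2 = 9 * x ^ 4 + 30 * x ^ 2 + 9 :=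
  sq_sqrt (by positivity)

lemma outerRoot_pos (x : ℝ) : 0 < outerRoot x :=
  sqrt_pos.2 (by have := quarticRoot_pos x; positivity)

lemma outerRoot_sq (x : ℝ) : outerRoot x ^ 2 = 3 + 3 * x ^ 2 + quarticRoot x :=
  sq_sqrt (by have := quarticRoot_pos x; positivity)

lemma integrand_eq_div_quarticRoot_mul_outerRoot (x : ℝ) :
    (1 + x ^ 2) ^ (-(3 : ℝ) / 2) /
        √((1 + 4 / 3 * x ^ 2 / (1 + x ^ 2) ^ 2) + √((1 + 4 / 3 * x ^ 2 / (1 + x ^ 2) ^ 2) ^ 3)) =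
      3 * √3 / (quarticRoot x * outerRoot x) := by
  set w := quarticRoot x
  set v := outerRoot x
  have hw := quarticRoot_pos x
  have hv := outerRoot_pos x
  have hu : (0 : ℝ) < 1 + x ^ 2 := by positivity
  set r := √(1 + x ^ 2)
  have hr0 : 0 < r := sqrt_pos.2 hu
  have hr2 : r ^ 2 = 1 + x ^ 2 := sq_sqrt hu.le
  have hφ : 1 + 4 / 3 * x ^ 2 / (1 + x ^ 2) ^ 2 = (w / (3 * r ^ 2)) ^ 2 := by
    rw [div_pow, quarticRoot_sq, hr2]; field_simp; ring
  have hsum : (w / (3 * r ^ 2)) ^ 2 + (w / (3 * r ^ 2)) ^ 3 = (w * v / (3 * √3 * r ^ 3)) ^ 2 := by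
    have h3 : √3 ^ 2 = 3 := sq_sqrt (by norm_num)
    field_simp
    rw [h3, outerRoot_sq, hr2]; ring
  have hpow : (1 + x ^ 2) ^ (-(3 : ℝ) / 2) = (r ^ 3)⁻¹ := by
    rw [show (-(3 : ℝ) / 2) = -((1 / 2) * (3 : ℕ)) by norm_num, rpow_neg hu.le, rpow_mul hu.le,
      rpow_natCast, ← sqrt_eq_rpow]
  rw [hφ, show ((w / (3 * r ^ 2)) ^ 2) ^ 3 = ((w / (3 * r ^ 2)) ^ 3) ^ 2 by ring,
    sqrt_sq (by positivity), hsum, sqrt_sq (by positivity), hpow]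
  field_simp

lemma hasDerivAt_quarticRoot (x : ℝ) :
    HasDerivAt quarticRoot ((36 * x ^ 3 + 60 * x) / (2 * quarticRoot x)) x := by
  have hp : HasDerivAt (fun y : ℝ => 9 * y ^ 4 + 30 * y ^ 2 + 9) (36 * x ^ 3 + 60 * x) x := by
    refine ((((hasDerivAt_pow 4 x).const_mul 9).add ((hasDerivAt_pow 2 x).const_mul 30)).add_const
      (9 : ℝ)).congr_deriv ?_
    push_cast; ring
  exact hp.sqrt (by positivity)

lemma hasDerivAt_outerRoot (x : ℝ) :
    HasDerivAt outerRoot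
      (3 * x * (quarticRoot x + 3 * x ^ 2 + 5) / (outerRoot x * quarticRoot x)) x := by
  have hw := quarticRoot_pos x
  have hin : HasDerivAt (fun y => 3 + 3 * y ^ 2 + quarticRoot y)
      (6 * x + (36 * x ^ 3 + 60 * x) / (2 * quarticRoot x)) x := by
    refine ((((hasDerivAt_pow 2 x).const_mul (3 : ℝ)).const_add 3).add
      (hasDerivAt_quarticRoot x)).congr_deriv ?_
    push_cast; ring
  refine (hin.sqrt (by positivity)).congr_deriv ?_
  rw [← outerRoot]; field_simp; ring

lemma hasDerivAt_antideriv (x : ℝ) :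
    HasDerivAt antideriv (3 * √3 / (quarticRoot x * outerRoot x)) x := by
  have hw := quarticRoot_pos x
  have hv := outerRoot_pos x
  have hs := ((hasDerivAt_id x).const_mul √2).div (hasDerivAt_outerRoot x) hv.ne'
  refine ((hs.arctan).const_mul (√6 / 2)).congr_deriv ?_
  have h2 : √2 ^ 2 = 2 := sq_sqrt (by norm_num)
  have h6 : √6 = √2 * √3 := by rw [← sqrt_mul (by norm_num)]; norm_num
  simp only [Pi.div_apply, id, mul_one, h6]
  field_simp
  rw [h2, outerRoot_sq]
  linear_combination 2 * quarticRoot_sq x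

lemma antideriv_zero : antideriv 0 = 0 := by simp [antideriv]

lemma outerRoot_eq_mul (x : ℝ) (hx : 0 < x) :
    outerRoot x = x * √(3 * x⁻¹ ^ 2 + 3 + √(9 + 30 * x⁻¹ ^ 2 + 9 * x⁻¹ ^ 4)) := by
  have hq : 9 * x ^ 4 + 30 * x ^ 2 + 9 = (x ^ 2) ^ 2 * (9 + 30 * x⁻¹ ^ 2 + 9 * x⁻¹ ^ 4) := by
    field_simp
  have ho : 3 + 3 * x ^ 2 + x ^ 2 * √(9 + 30 * x⁻¹ ^ 2 + 9 * x⁻¹ ^ 4) =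
      x ^ 2 * (3 * x⁻¹ ^ 2 + 3 + √(9 + 30 * x⁻¹ ^ 2 + 9 * x⁻¹ ^ 4)) := by
    field_simp
  rw [outerRoot, quarticRoot, hq, sqrt_mul (by positivity), sqrt_sq (by positivity), ho,
    sqrt_mul (by positivity), sqrt_sq hx.le]

lemma tendsto_antideriv_atTop : Tendsto antideriv atTop (𝓝 (π / (2 * √6))) := by
  have h6 : √6 = √2 * √3 := by rw [← sqrt_mul (by norm_num)]; norm_num
  have h9 : √9 = 3 := by rw [show (9 : ℝ) = 3 ^ 2 by norm_num, sqrt_sq (by norm_num)]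
  have hinner :
      Tendsto (fun y : ℝ => 3 * y ^ 2 + 3 + √(9 + 30 * y ^ 2 + 9 * y ^ 4)) (𝓝 0) (𝓝 6) := by
    have : ContinuousAt (fun y : ℝ => 3 * y ^ 2 + 3 + √(9 + 30 * y ^ 2 + 9 * y ^ 4)) 0 := by
      fun_prop
    convert this.tendsto using 2
    norm_num [h9]
  have hg : Tendsto (fun y : ℝ => √2 / √(3 * y ^ 2 + 3 + √(9 + 30 * y ^ 2 + 9 * y ^ 4))) (𝓝 0)
      (𝓝 (√3)⁻¹) := by
    have hval : √2 / √6 = (√3)⁻¹ := by rw [h6]; field_simp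
    rw [← hval]
    exact tendsto_const_nhds.div ((continuous_sqrt.tendsto 6).comp hinner) (by positivity)
  have harg : Tendsto (fun x => √2 * x / outerRoot x) atTop (𝓝 (√3)⁻¹) := by
    refine (hg.comp tendsto_inv_atTop_zero).congr' ?_
    filter_upwards [eventually_gt_atTop 0] with x hx
    rw [Function.comp_apply, outerRoot_eq_mul x hx]
    field_simp
  have hval : √6 / 2 * arctan (√3)⁻¹ = π / (2 * √6) := by
    have h66 : √6 ^ 2 = 6 := sq_sqrt (by norm_num)
    rw [arctan_inv_sqrt_three]; field_simp; rw [h66]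
  rw [← hval]
  exact ((continuous_arctan.tendsto _).comp harg).const_mul (√6 / 2)

theorem stmt_15 :
    ∫ x in Set.Ioi (0 : ℝ),
        (1 + x ^ 2) ^ (-(3 : ℝ) / 2) /
          Real.sqrt ((1 + 4 / 3 * x ^ 2 / (1 + x ^ 2) ^ 2) +
            Real.sqrt ((1 + 4 / 3 * x ^ 2 / (1 + x ^ 2) ^ 2) ^ 3)) =
      π / (2 * Real.sqrt 6) := by
  simp_rw [integrand_eq_div_quarticRoot_mul_outerRoot]
  have hnonneg (x : ℝ) : 0 ≤ 3 * √3 / (quarticRoot x * outerRoot x) := by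
    have := quarticRoot_pos x
    have := outerRoot_pos x
    positivity
  rw [integral_Ioi_of_hasDerivAt_of_nonneg' (fun x _ => hasDerivAt_antideriv x)
    (fun x _ => hnonneg x) tendsto_antideriv_atTop, antideriv_zero, sub_zero]
end

section
/- For all x with |x| < 1: √((√(1+x) − 1)/x) = (1/√2) Σ_{k≥0} (1/4)_k (3/4)_k / ((3/2)_k k!) (−x)^k, the left side extended continuously at 0 to 1/√2. -/
/-!
For `-1 < x < 0` put `t = √(-x)`. The odd part of the binomial series of `(1 + t) ^ a` is a
hypergeometric series in `t²`, because
`choose a (2k+1) = a ((1-a)/2)_k (1-a/2)_k / ((3/2)_k k!)`; for `a = 1/2` this reads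
`√(1 + t) - √(1 - t) = t ₂F₁(1/4, 3/4; 3/2; -x)`, and the denesting
`√(1 + t) - √(1 - t) = √2 √(1 - √(1 + x))` gives the identity on `(-1, 0)`. Away from `0` the
left side equals `1 / √(1 + √(1 + x))`, which is analytic on `(-1, 1)` like the right side, so the
identity theorem extends the equality to all of `(-1, 1)`.
-/

open Real Polynomial

theorem Ring.choose_succ_eq_mul_div {K : Type*} [Field K] [CharZero K] (a : K) (n : ℕ) :
    Ring.choose a (n + 1) = Ring.choose a n * (a - n) / (n + 1) := by
  simp only [Ring.choose_eq_smul, descPochhammer_succ_right, smeval_mul, smul_eq_mul]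
  simp [smeval_sub, smeval_X, smeval_natCast, Nat.factorial_succ]
  field_simp

theorem Ring.choose_two_mul_add_one {K : Type*} [Field K] [CharZero K] (a : K) (k : ℕ) :
    Ring.choose a (2 * k + 1) =
      a * ordinaryHypergeometricCoefficient ((1 - a) / 2) (1 - a / 2) (3 / 2) k := by
  unfold ordinaryHypergeometricCoefficient
  induction k with
  | zero => simp
  | succ k ih =>
    have h2 : (2 * k + 1 + 1 : K) ≠ 0 := by exact_mod_cast (show 2 * k + 1 + 1 ≠ 0 by omega)
    have h3 : (2 * k + 2 + 1 : K) ≠ 0 := by exact_mod_cast (show 2 * k + 2 + 1 ≠ 0 by omega)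
    have hf : (k.factorial : K) ≠ 0 := by exact_mod_cast k.factorial_ne_zero
    have hc : (ascPochhammer K k).eval (3 / 2) ≠ 0 := by
      rw [Ne, ascPochhammer_eval_eq_zero_iff]
      rintro ⟨j, -, hj⟩
      have : ((2 * j + 3 : ℕ) : K) = 0 := by push_cast; linear_combination 2 * hj
      exact absurd (Nat.cast_eq_zero.mp this) (by omega)
    rw [show 2 * (k + 1) + 1 = 2 * k + 1 + 1 + 1 by ring, Ring.choose_succ_eq_mul_div,
      Ring.choose_succ_eq_mul_div, ih]
    simp only [ascPochhammer_succ_eval, Nat.factorial_succ]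
    rw [show (3 / 2 + k : K) = (2 * k + 2 + 1) / 2 by ring]
    push_cast
    field_simp
    ring

namespace Real

theorem hasSum_choose_mul_pow (a : ℝ) {y : ℝ} (hy : |y| < 1) :
    HasSum (fun n ↦ Ring.choose a n * y ^ n) ((1 + y) ^ a) := by
  have hmem : y ∈ Metric.eball (0 : ℝ) 1 := by
    rw [Metric.mem_eball, edist_zero_right, enorm_eq_nnnorm]
    exact_mod_cast hy
  simpa [binomialSeries, FormalMultilinearSeries.ofScalars_apply_eq, mul_comm] using
    (one_add_rpow_hasFPowerSeriesOnBall_zero (a := a)).hasSum hmem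

theorem hasSum_two_mul_choose_odd_mul_pow (a : ℝ) {y : ℝ} (hy : |y| < 1) :
    HasSum (fun k : ℕ ↦ 2 * Ring.choose a (2 * k + 1) * y ^ (2 * k + 1))
      ((1 + y) ^ a - (1 - y) ^ a) := by
  have h := (hasSum_choose_mul_pow a hy).sub
    (hasSum_choose_mul_pow a (y := -y) (by rwa [abs_neg]))
  rw [← sub_eq_add_neg] at h
  have hodd : Function.Injective (fun k : ℕ ↦ 2 * k + 1) := fun _ _ h ↦ by
    simp only at h; omega
  have heven : ∀ n ∉ Set.range (fun k : ℕ ↦ 2 * k + 1),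
      Ring.choose a n * y ^ n - Ring.choose a n * (-y) ^ n = 0 := by
    intro n hn
    have : Even n := Nat.not_odd_iff_even.mp fun ⟨k, hk⟩ ↦ hn ⟨k, hk.symm⟩
    rw [this.neg_pow, sub_self]
  convert (hodd.hasSum_iff heven).mpr h using 2 with k
  simp only [Function.comp_apply, (odd_two_mul_add_one k).neg_pow]
  ring

theorem one_add_rpow_sub_one_sub_rpow (a : ℝ) {t : ℝ} (ht : |t| < 1) :
    (1 + t) ^ a - (1 - t) ^ a =
      2 * a * t * ₂F₁ ((1 - a) / 2) (1 - a / 2) (3 / 2) (t ^ 2) := by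
  rw [← (hasSum_two_mul_choose_odd_mul_pow a ht).tsum_eq, ordinaryHypergeometric_eq_tsum,
    ← tsum_mul_left]
  congr 1 with k
  rw [Ring.choose_two_mul_add_one, smul_eq_mul]
  ring

theorem sqrt_one_add_sub_sqrt_one_sub {t : ℝ} (h0 : 0 ≤ t) (h1 : t ≤ 1) :
    √(1 + t) - √(1 - t) = √2 * √(1 - √(1 - t ^ 2)) := by
  have hA := sq_sqrt (show 0 ≤ 1 + t by linarith)
  have hB := sq_sqrt (show 0 ≤ 1 - t by linarith)
  have hAB : √(1 + t) * √(1 - t) = √(1 - t ^ 2) := by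
    rw [← sqrt_mul (by linarith)]; ring_nf
  have hBA : √(1 - t) ≤ √(1 + t) := sqrt_le_sqrt (by linarith)
  rw [← sqrt_mul zero_le_two, ← hAB, ← sqrt_sq (sub_nonneg.mpr hBA)]
  congr 1
  linear_combination hA + hB

theorem sqrt_sqrt_one_add_sub_one_div {x : ℝ} (hx : -1 ≤ x) (hx0 : x ≠ 0) :
    √((√(1 + x) - 1) / x) = (√(1 + √(1 + x)))⁻¹ := by
  have hs := sq_sqrt (show 0 ≤ 1 + x by linarith)
  have hpos : 0 < 1 + √(1 + x) := by positivity
  rw [← sqrt_inv]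
  congr 1
  field_simp
  linear_combination hs

theorem sqrt_sqrt_one_add_sub_one_div_of_neg {x : ℝ} (hx1 : -1 < x) (hx0 : x < 0) :
    √((√(1 + x) - 1) / x) = 1 / √2 * ₂F₁ (1 / 4 : ℝ) (3 / 4) (3 / 2) (-x) := by
  set t := √(-x)
  have ht0 : 0 < t := sqrt_pos.mpr (by linarith)
  have ht2 : t ^ 2 = -x := sq_sqrt (by linarith)
  have ht1 : t < 1 := by
    rw [← sqrt_one]; exact sqrt_lt_sqrt (by linarith) (by linarith)
  have hodd := one_add_rpow_sub_one_sub_rpow (1 / 2) (t := t) (by rwa [abs_of_pos ht0])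
  rw [← sqrt_eq_rpow, ← sqrt_eq_rpow, sqrt_one_add_sub_sqrt_one_sub ht0.le ht1.le, ht2]
    at hodd
  norm_num at hodd
  have hlhs : (√(1 + x) - 1) / x = (1 - √(1 + x)) / t ^ 2 := by
    rw [ht2, div_neg, ← neg_div, neg_sub]
  rw [hlhs, sqrt_div' _ (by positivity), sqrt_sq ht0.le]
  field_simp
  linear_combination hodd

theorem analyticAt_sqrt {x : ℝ} (hx : 0 < x) : AnalyticAt ℝ Real.sqrt x := by
  have h : AnalyticAt ℝ (fun y ↦ exp (log y * (1 / 2))) x := by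
    fun_prop (disch := assumption)
  refine h.congr (Filter.eventually_of_mem (isOpen_Ioi.mem_nhds hx) fun y (hy : 0 < y) ↦ ?_)
  simp only [sqrt_eq_rpow, rpow_def_of_pos hy]

end Real

theorem analyticAt_ordinaryHypergeometric {a b c x : ℝ}
    (habc : ∀ kn : ℕ, (kn : ℝ) ≠ -a ∧ (kn : ℝ) ≠ -b ∧ (kn : ℝ) ≠ -c) (hx : |x| < 1) :
    AnalyticAt ℝ (₂F₁ a b c) x := by
  have hr := ordinaryHypergeometricSeries_radius_eq_one (𝔸 := ℝ) a b c habc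
  have hmem : x ∈ Metric.eball (0 : ℝ) (ordinaryHypergeometricSeries ℝ a b c).radius := by
    rw [hr, Metric.mem_eball, edist_zero_right, enorm_eq_nnnorm]
    exact_mod_cast hx
  exact ((ordinaryHypergeometricSeries ℝ a b c).hasFPowerSeriesOnBall
    (by rw [hr]; exact one_pos)).analyticAt_of_mem hmem

theorem analyticOnNhd_inv_sqrt_one_add_sqrt_one_add :
    AnalyticOnNhd ℝ (fun x : ℝ ↦ (√(1 + √(1 + x)))⁻¹) (Set.Ioi (-1)) := by
  intro x (hx : -1 < x)
  have hin : AnalyticAt ℝ (fun y : ℝ ↦ √(1 + y)) x :=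
    (analyticAt_sqrt (by linarith)).comp (analyticAt_const.add analyticAt_id)
  have hout : AnalyticAt ℝ (fun y : ℝ ↦ √(1 + √(1 + y))) x :=
    (analyticAt_sqrt (by positivity)).comp (analyticAt_const.add hin)
  exact hout.inv (by positivity)

theorem eqOn_inv_sqrt_one_add_sqrt_one_add_ordinaryHypergeometric :
    Set.EqOn (fun x : ℝ ↦ (√(1 + √(1 + x)))⁻¹)
      (fun x ↦ 1 / √2 * ₂F₁ (1 / 4 : ℝ) (3 / 4) (3 / 2) (-x)) (Set.Ioo (-1) 1) := by
  have habc : ∀ kn : ℕ, (kn : ℝ) ≠ -(1 / 4) ∧ (kn : ℝ) ≠ -(3 / 4) ∧ (kn : ℝ) ≠ -(3 / 2) := by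
    intro kn
    have := kn.cast_nonneg (α := ℝ)
    refine ⟨?_, ?_, ?_⟩ <;> intro h <;> linarith
  have hF : AnalyticOnNhd ℝ (fun x ↦ 1 / √2 * ₂F₁ (1 / 4 : ℝ) (3 / 4) (3 / 2) (-x))
      (Set.Ioo (-1) 1) := fun x ⟨hx1, hx2⟩ ↦
    analyticAt_const.mul ((analyticAt_ordinaryHypergeometric habc
      (by rw [abs_neg, abs_lt]; exact ⟨hx1, hx2⟩)).comp analyticAt_id.neg)
  refine (analyticOnNhd_inv_sqrt_one_add_sqrt_one_add.mono Set.Ioo_subset_Ioi_self)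
    |>.eqOn_of_preconnected_of_eventuallyEq hF isPreconnected_Ioo (z₀ := -1 / 2)
      (by norm_num) ?_
  filter_upwards [Ioo_mem_nhds (show (-1 : ℝ) < -1 / 2 by norm_num)
    (show -1 / 2 < (0 : ℝ) by norm_num)] with x ⟨hx1, hx0⟩
  rw [← sqrt_sqrt_one_add_sub_one_div hx1.le hx0.ne, sqrt_sqrt_one_add_sub_one_div_of_neg hx1 hx0]

theorem stmt_17 (x : ℝ) (hx : |x| < 1) :
    (if x = 0 then 1 / Real.sqrt 2 else Real.sqrt ((Real.sqrt (1 + x) - 1) / x)) =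
      1 / Real.sqrt 2 *
        ∑' k : ℕ, (ascPochhammer ℝ k).eval (1 / 4) * (ascPochhammer ℝ k).eval (3 / 4) /
          ((ascPochhammer ℝ k).eval (3 / 2) * (k.factorial : ℝ)) * (-x) ^ k := by
  have hseries :
      ∑' k : ℕ, (ascPochhammer ℝ k).eval (1 / 4) * (ascPochhammer ℝ k).eval (3 / 4) /
        ((ascPochhammer ℝ k).eval (3 / 2) * (k.factorial : ℝ)) * (-x) ^ k =
      ₂F₁ (1 / 4 : ℝ) (3 / 4) (3 / 2) (-x) := by
    rw [ordinaryHypergeometric_eq_tsum]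
    congr 1 with k
    rw [smul_eq_mul]
    ring
  obtain ⟨hx1, hx2⟩ := abs_lt.mp hx
  rw [hseries]
  split_ifs with h0
  · simp [h0]
  rw [sqrt_sqrt_one_add_sub_one_div hx1.le h0]
  exact eqOn_inv_sqrt_one_add_sqrt_one_add_ordinaryHypergeometric ⟨hx1, hx2⟩
end
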